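/- arXiv:2403.13646 — 4 statements merged into one kernel-verified Lean document; each statement's English description precedes it below -/
import Mathlib

section
/- There is a constant c_s > 0 with the following property: for all e₀, b, γ, d, r₀ > 0 there exists an admissible configuration (h,H,σ) ∈ A(γ,e₀,b,d,r₀) with σ = 0 (i.e., k = 0) such that F(h,H,σ) ≤ c_s·(γ(1+d) + (e₀·γ·d)^{2/3}). -/
open MeasureTheory Real Set
open scoped NNReal Classical

noncomputable section

abbrev Mat2 := Matrix (Fin 2) (Fin 2) ℝ

/-- Squared Frobenius norm of a 2×2 real matrix. -/
def frobSq (M : Mat2) : ℝ := ∑ i, ∑ j, (M i j)^2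

/-- Frobenius norm of a 2×2 real matrix. -/
def frobNorm (M : Mat2) : ℝ := Real.sqrt (frobSq M)

/-- Symmetric part of a matrix. -/
def matSym (M : Mat2) : Mat2 := (1/2 : ℝ) • (M + M.transpose)

/-- Open Euclidean ball in ℝ². -/
def ball2 (p : ℝ × ℝ) (r : ℝ) : Set (ℝ × ℝ) :=
  {q | (q.1 - p.1)^2 + (q.2 - p.2)^2 < r^2}

/-- Closed Euclidean ball in ℝ². -/
def closedBall2 (p : ℝ × ℝ) (r : ℝ) : Set (ℝ × ℝ) :=
  {q | (q.1 - p.1)^2 + (q.2 - p.2)^2 ≤ r^2}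

/-- First partial derivative of a scalar field on ℝ². -/
def D1 (φ : ℝ × ℝ → ℝ) (z : ℝ × ℝ) : ℝ := fderiv ℝ φ z (1, 0)

/-- Second partial derivative of a scalar field on ℝ². -/
def D2 (φ : ℝ × ℝ → ℝ) (z : ℝ × ℝ) : ℝ := fderiv ℝ φ z (0, 1)




def etaF (l y : ℝ) : ℝ := 1 - Real.smoothTransition (2*y/l - 1)
def etaF' (l : ℝ) : ℝ → ℝ := deriv (etaF l)

lemma inner_contDiff (l : ℝ) : ContDiff ℝ ((⊤:ℕ∞):WithTop ℕ∞) (fun y : ℝ => 2*y/l - 1) :=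
  ((contDiff_const.mul contDiff_id).div_const l).sub contDiff_const

lemma etaF_contDiff (l : ℝ) : ContDiff ℝ ((⊤:ℕ∞):WithTop ℕ∞) (etaF l) :=
  contDiff_const.sub ((Real.smoothTransition.contDiff (n := (⊤:ℕ∞))).comp
    (inner_contDiff l))

lemma etaF_cont (l : ℝ) : Continuous (etaF l) := (etaF_contDiff l).continuous

lemma etaF'_cont (l : ℝ) : Continuous (etaF' l) :=
  (etaF_contDiff l).continuous_deriv (by exact_mod_cast le_top)

lemma etaF_one {l y : ℝ} (hl : 0 < l) (hy : y ≤ l/2) : etaF l y = 1 := by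
  have h1 : 2*y/l ≤ 1 := (div_le_one hl).mpr (by linarith)
  have := Real.smoothTransition.zero_of_nonpos (x := 2*y/l - 1) (by linarith)
  simp [etaF, this]

lemma etaF_zero {l y : ℝ} (hl : 0 < l) (hy : l ≤ y) : etaF l y = 0 := by
  have h1 : 2 ≤ 2*y/l := by rw [le_div_iff₀ hl]; linarith
  have := Real.smoothTransition.one_of_one_le (x := 2*y/l - 1) (by linarith)
  simp [etaF, this]

lemma etaF_nonneg (l y : ℝ) : 0 ≤ etaF l y := by
  have := Real.smoothTransition.le_one (2*y/l - 1); simp [etaF]; linarith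

lemma etaF_le_one (l y : ℝ) : etaF l y ≤ 1 := by
  have := Real.smoothTransition.nonneg (2*y/l - 1); simp [etaF]; linarith

lemma derivT_zero_neg {u : ℝ} (hu : u < 0) : deriv Real.smoothTransition u = 0 := by
  have h : Real.smoothTransition =ᶠ[nhds u] (fun _ => (0:ℝ)) := by
    filter_upwards [Iio_mem_nhds hu] with v hv
    exact Real.smoothTransition.zero_of_nonpos (le_of_lt hv)
  rw [h.deriv_eq]; exact deriv_const u 0

lemma derivT_zero_pos {u : ℝ} (hu : 1 < u) : deriv Real.smoothTransition u = 0 := by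
  have h : Real.smoothTransition =ᶠ[nhds u] (fun _ => (1:ℝ)) := by
    filter_upwards [Ioi_mem_nhds hu] with v hv
    exact Real.smoothTransition.one_of_one_le (le_of_lt hv)
  rw [h.deriv_eq]; exact deriv_const u 1

lemma etaF_hasDerivAt (l : ℝ) (y : ℝ) :
    HasDerivAt (etaF l) (-(deriv Real.smoothTransition (2*y/l - 1) * (2/l))) y := by
  have hT : HasDerivAt Real.smoothTransition (deriv Real.smoothTransition (2*y/l-1)) (2*y/l-1) :=
    ((Real.smoothTransition.contDiff (n := 1)).differentiable (by norm_num) (2*y/l-1)).hasDerivAt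
  have hin : HasDerivAt (fun y : ℝ => 2*y/l - 1) (2/l) y := by
    simpa using (((hasDerivAt_id y).const_mul 2).div_const l).sub_const 1
  have := (hasDerivAt_const y (1:ℝ)).sub (hT.comp y hin)
  rw [zero_sub] at this
  exact this

lemma etaF'_eq (l y : ℝ) :
    etaF' l y = -(deriv Real.smoothTransition (2*y/l - 1) * (2/l)) :=
  (etaF_hasDerivAt l y).deriv

lemma etaF_hasDerivAt' (l y : ℝ) : HasDerivAt (etaF l) (etaF' l y) y := by
  rw [etaF'_eq]; exact etaF_hasDerivAt l y

lemma etaF'_zero_lt {l y : ℝ} (hl : 0 < l) (hy : y < l/2) : etaF' l y = 0 := by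
  rw [etaF'_eq, derivT_zero_neg, zero_mul, neg_zero]
  have : 2*y/l < 1 := (div_lt_one hl).mpr (by linarith)
  linarith

lemma etaF'_zero_gt {l y : ℝ} (hl : 0 < l) (hy : l < y) : etaF' l y = 0 := by
  rw [etaF'_eq, derivT_zero_pos, zero_mul, neg_zero]
  have : 2 < 2*y/l := by rw [lt_div_iff₀ hl]; linarith
  linarith

/-- a global bound on the derivative of the smooth transition. -/
lemma exists_M0 : ∃ M0 : ℝ, 0 ≤ M0 ∧ ∀ u, |deriv Real.smoothTransition u| ≤ M0 := by
  obtain ⟨C, hC⟩ := isCompact_Icc.exists_bound_of_continuousOn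
    (((Real.smoothTransition.contDiff (n := (⊤ : ℕ∞))).continuous_deriv
      (by exact_mod_cast le_top)).continuousOn (s := Icc (0:ℝ) 1))
  refine ⟨max C 0, le_max_right _ _, fun u => ?_⟩
  rcases lt_or_ge u 0 with hu | hu
  · rw [derivT_zero_neg hu]; simpa using le_max_right C 0
  rcases le_or_gt u 1 with hu1 | hu1
  · exact le_trans (hC u ⟨hu, hu1⟩) (le_max_left _ _)
  · rw [derivT_zero_pos hu1]; simpa using le_max_right C 0

lemma etaF'_bound {l : ℝ} (hl : 0 < l) {M0 : ℝ} (hM : ∀ u, |deriv Real.smoothTransition u| ≤ M0)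
    (y : ℝ) : |etaF' l y| ≤ 2*M0/l := by
  rw [etaF'_eq, abs_neg, abs_mul]
  have h2 : |2/l| = 2/l := abs_of_pos (by positivity)
  rw [h2]
  have := hM (2*y/l - 1)
  have h3 : (0:ℝ) ≤ 2/l := by positivity
  calc |deriv Real.smoothTransition (2*y/l-1)| * (2/l) ≤ M0 * (2/l) :=
        mul_le_mul_of_nonneg_right this h3
    _ = 2*M0/l := by ring

section phi
variable {φ : ℝ × ℝ → ℝ} (hφ : ContDiff ℝ (⊤ : ℕ∞) φ) (hφc : HasCompactSupport φ)

lemma fderiv_zero_outside {z : ℝ × ℝ} (hz : z ∉ tsupport φ) : fderiv ℝ φ z = 0 := by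
  have h : φ =ᶠ[nhds z] (fun _ => (0:ℝ)) := notMem_tsupport_iff_eventuallyEq.mp hz
  rw [h.fderiv_eq]; exact fderiv_const_apply 0

include hφ in
lemma D1_cont : Continuous (D1 φ) :=
  (hφ.continuous_fderiv (by simp)).clm_apply continuous_const

include hφ in
lemma D2_cont : Continuous (D2 φ) :=
  (hφ.continuous_fderiv (by simp)).clm_apply continuous_const

include hφ in
lemma sliceY_hasDerivAt (x t : ℝ) : HasDerivAt (fun y => φ (x, y)) (D2 φ (x, t)) t := by
  have h1 : HasDerivAt (fun y : ℝ => (x, y)) ((0:ℝ), (1:ℝ)) t :=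
    (hasDerivAt_const t x).prodMk (hasDerivAt_id t)
  exact (hφ.differentiable (by simp) (x, t)).hasFDerivAt.comp_hasDerivAt t h1

include hφ in
lemma sliceX_hasDerivAt (y t : ℝ) : HasDerivAt (fun x => φ (x, y)) (D1 φ (t, y)) t := by
  have h1 : HasDerivAt (fun x : ℝ => (x, y)) ((1:ℝ), (0:ℝ)) t :=
    (hasDerivAt_id t).prodMk (hasDerivAt_const t y)
  exact (hφ.differentiable (by simp) (t, y)).hasFDerivAt.comp_hasDerivAt t h1

include hφc in
lemma sliceY_compSupp (x : ℝ) (f : ℝ × ℝ → ℝ) (hf : ∀ z ∉ tsupport φ, f z = 0) :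
    HasCompactSupport (fun y => f (x, y)) := by
  refine HasCompactSupport.intro (hφc.image continuous_snd) (fun y hy => ?_)
  exact hf _ (fun hmem => hy ⟨(x, y), hmem, rfl⟩)

include hφc in
lemma sliceX_compSupp (y : ℝ) (f : ℝ × ℝ → ℝ) (hf : ∀ z ∉ tsupport φ, f z = 0) :
    HasCompactSupport (fun x => f (x, y)) := by
  refine HasCompactSupport.intro (hφc.image continuous_fst) (fun x hx => ?_)
  exact hf _ (fun hmem => hx ⟨(x, y), hmem, rfl⟩)

end phi

section key
variable {φ : ℝ × ℝ → ℝ}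

/-- Inner integration by parts in y. -/
lemma ibp_y (hφ : ContDiff ℝ (⊤ : ℕ∞) φ) (hφc : HasCompactSupport φ) (l e0 x : ℝ) :
    ∫ y, (e0 * etaF l y) * D2 φ (x, y) = - ∫ y, (e0 * etaF' l y) * φ (x, y) := by
  have hu : ∀ y, HasDerivAt (fun y => e0 * etaF l y) (e0 * etaF' l y) y :=
    fun y => (etaF_hasDerivAt' l y).const_mul e0
  have hv : ∀ y, HasDerivAt (fun y => φ (x, y)) (D2 φ (x, y)) y :=
    fun y => sliceY_hasDerivAt hφ x y
  have hvs : HasCompactSupport (fun y => φ (x, y)) :=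
    sliceY_compSupp hφc x φ (fun z hz => image_eq_zero_of_notMem_tsupport hz)
  have hv's : HasCompactSupport (fun y => D2 φ (x, y)) :=
    sliceY_compSupp hφc x (D2 φ) (fun z hz => by
      simp [D2, fderiv_zero_outside hz])
  have hvc : Continuous (fun y => φ (x, y)) :=
    hφ.continuous.comp (continuous_const.prodMk continuous_id)
  have hv'c : Continuous (fun y => D2 φ (x, y)) :=
    (D2_cont hφ).comp (continuous_const.prodMk continuous_id)
  have huc : Continuous (fun y => e0 * etaF l y) := continuous_const.mul (etaF_cont l)
  have hu'c : Continuous (fun y => e0 * etaF' l y) := continuous_const.mul (etaF'_cont l)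
  exact MeasureTheory.integral_mul_deriv_eq_deriv_mul_of_integrable (fun y _ => hu y) (fun y _ => hv y)
    ((huc.mul hv'c).integrable_of_hasCompactSupport (hv's.mul_left))
    ((hu'c.mul hvc).integrable_of_hasCompactSupport (hvs.mul_left))
    ((huc.mul hvc).integrable_of_hasCompactSupport (hvs.mul_left))

/-- Inner integration by parts in x. -/
lemma ibp_x (hφ : ContDiff ℝ (⊤ : ℕ∞) φ) (hφc : HasCompactSupport φ) (c y : ℝ) (C : ℝ) :
    ∫ x, (C * (x - c)) * D1 φ (x, y) = - ∫ x, C * φ (x, y) := by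
  have hu : ∀ x : ℝ, HasDerivAt (fun x : ℝ => C * (x - c)) C x := by
    intro x
    simpa using ((hasDerivAt_id x).sub_const c).const_mul C
  have hv : ∀ x, HasDerivAt (fun x => φ (x, y)) (D1 φ (x, y)) x :=
    fun x => sliceX_hasDerivAt hφ y x
  have hvs : HasCompactSupport (fun x => φ (x, y)) :=
    sliceX_compSupp hφc y φ (fun z hz => image_eq_zero_of_notMem_tsupport hz)
  have hv's : HasCompactSupport (fun x => D1 φ (x, y)) :=
    sliceX_compSupp hφc y (D1 φ) (fun z hz => by simp [D1, fderiv_zero_outside hz])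
  have hvc : Continuous (fun x => φ (x, y)) :=
    hφ.continuous.comp (continuous_id.prodMk continuous_const)
  have hv'c : Continuous (fun x => D1 φ (x, y)) :=
    (D1_cont hφ).comp (continuous_id.prodMk continuous_const)
  have huc : Continuous (fun x : ℝ => C * (x - c)) := by fun_prop
  exact MeasureTheory.integral_mul_deriv_eq_deriv_mul_of_integrable (fun y _ => hu y) (fun y _ => hv y)
    ((huc.mul hv'c).integrable_of_hasCompactSupport (hv's.mul_left))
    ((continuous_const.mul hvc).integrable_of_hasCompactSupport (hvs.mul_left))
    ((huc.mul hvc).integrable_of_hasCompactSupport (hvs.mul_left))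

end key

section key2
variable {φ : ℝ × ℝ → ℝ}

lemma key_integral (e0 l : ℝ) (hφ : ContDiff ℝ (⊤ : ℕ∞) φ) (hφc : HasCompactSupport φ) :
    ∫ z : ℝ × ℝ, (e0 * etaF l z.2 * D2 φ z - e0 * etaF' l z.2 * (z.1 - 1/2) * D1 φ z) = 0 := by
  have hD2s : HasCompactSupport (D2 φ) :=
    HasCompactSupport.intro hφc (fun z hz => by simp [D2, fderiv_zero_outside hz])
  have hD1s : HasCompactSupport (D1 φ) :=
    HasCompactSupport.intro hφc (fun z hz => by simp [D1, fderiv_zero_outside hz])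
  set f1 : ℝ × ℝ → ℝ := fun z => (e0 * etaF l z.2) * D2 φ z with hf1def
  set f2 : ℝ × ℝ → ℝ := fun z => (e0 * etaF' l z.2 * (z.1 - 1/2)) * D1 φ z with hf2def
  set G : ℝ × ℝ → ℝ := fun z => (e0 * etaF' l z.2) * φ z with hGdef
  have hf1c : Continuous f1 :=
    (continuous_const.mul ((etaF_cont l).comp continuous_snd)).mul (D2_cont hφ)
  have hf2c : Continuous f2 :=
    ((continuous_const.mul ((etaF'_cont l).comp continuous_snd)).mul
      (continuous_fst.sub continuous_const)).mul (D1_cont hφ)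
  have hGc : Continuous G :=
    (continuous_const.mul ((etaF'_cont l).comp continuous_snd)).mul hφ.continuous
  have hf1i : Integrable f1 := hf1c.integrable_of_hasCompactSupport hD2s.mul_left
  have hf2i : Integrable f2 := hf2c.integrable_of_hasCompactSupport hD1s.mul_left
  have hGi : Integrable G := hGc.integrable_of_hasCompactSupport hφc.mul_left
  rw [Measure.volume_eq_prod] at hf1i hf2i hGi
  have hswapG : ∫ x : ℝ, ∫ y : ℝ, G (x, y) = ∫ y : ℝ, ∫ x : ℝ, G (x, y) :=
    integral_integral_swap hGi
  have h1 : ∫ z : ℝ × ℝ, f1 z = - ∫ x : ℝ, ∫ y : ℝ, G (x, y) := by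
    rw [Measure.volume_eq_prod, MeasureTheory.integral_prod _ hf1i]
    rw [← integral_neg]
    refine integral_congr_ae (Filter.Eventually.of_forall fun x => ?_)
    simp only [hf1def, hGdef]
    simpa using ibp_y hφ hφc l e0 x
  have h2 : ∫ z : ℝ × ℝ, f2 z = - ∫ x : ℝ, ∫ y : ℝ, G (x, y) := by
    rw [Measure.volume_eq_prod, MeasureTheory.integral_prod _ hf2i]
    have hsw : ∫ x : ℝ, ∫ y : ℝ, f2 (x, y) = ∫ y : ℝ, ∫ x : ℝ, f2 (x, y) :=
      integral_integral_swap hf2i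
    rw [hsw, hswapG, ← integral_neg]
    refine integral_congr_ae (Filter.Eventually.of_forall fun y => ?_)
    simp only [hf2def, hGdef]
    simpa [mul_assoc, mul_comm, mul_left_comm] using ibp_x hφ hφc (1/2) y (e0 * etaF' l y)
  have hsub : ∫ z : ℝ × ℝ, (f1 z - f2 z) = (∫ z, f1 z) - ∫ z, f2 z := by
    rw [← Measure.volume_eq_prod] at hf1i hf2i
    exact integral_sub hf1i hf2i
  calc ∫ z : ℝ × ℝ, (e0 * etaF l z.2 * D2 φ z - e0 * etaF' l z.2 * (z.1 - 1/2) * D1 φ z)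
      = ∫ z : ℝ × ℝ, (f1 z - f2 z) := by rfl
    _ = (∫ z, f1 z) - ∫ z, f2 z := hsub
    _ = 0 := by rw [h1, h2]; ring

end key2


/-- A mollifier J₁ ∈ C_c^∞(B₁(0);[0,∞)) with ∫ J₁ = 1. -/
structure Mollifier (J1 : ℝ × ℝ → ℝ) : Prop where
  smooth : ContDiff ℝ (⊤ : ℕ∞) J1
  nonneg : ∀ z, 0 ≤ J1 z
  cpt : HasCompactSupport J1
  supp : tsupport J1 ⊆ ball2 0 1
  mass : (∫ z, J1 z) = 1

/-- Rescaled mollifier J_{r₀}(z) = r₀⁻² J₁(z/r₀). -/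
def Jr (J1 : ℝ × ℝ → ℝ) (r0 : ℝ) (z : ℝ × ℝ) : ℝ := (r0^2)⁻¹ * J1 (r0⁻¹ • z)

/-- The film domain Ω_h = {(x,y) : 0 < x < 1, 0 < y < h(x)}. -/
def Omeg (h : ℝ → ℝ) : Set (ℝ × ℝ) := {p | 0 < p.1 ∧ p.1 < 1 ∧ 0 < p.2 ∧ p.2 < h p.1}

/-- The open set (interior of Ω_h together with the substrate strip)
    on which the curl condition with boundary datum is tested. -/
def Uset (h : ℝ → ℝ) : Set (ℝ × ℝ) := {p | 0 < p.1 ∧ p.1 < 1 ∧ p.2 < h p.1}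

/-- Extension of the strain field H by the boundary misfit matrix (rows (e₀,0),(0,0))
    on the substrate (0,1)×(−∞,0] and by 0 elsewhere. -/
def Hext (e0 : ℝ) (h : ℝ → ℝ) (H : ℝ × ℝ → Mat2) (z : ℝ × ℝ) : Mat2 :=
  if z ∈ Omeg h then H z
  else if 0 < z.1 ∧ z.1 < 1 ∧ z.2 ≤ 0 then !![e0, 0; 0, 0]
  else 0

/-- Admissible configurations (h,H,σ) ∈ A(γ,e₀,b,d,r₀): a Lipschitz film profile h
    of volume d vanishing outside [0,1]; dislocation points pts with Burgers vector (b,0)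
    whose r₀-balls lie in Ω_h; and an L² strain field H whose row-wise distributional curl
    equals σ∗J_{r₀} in Ω_h and which attains the tangential boundary value (e₀,0) (first row)
    and (0,0) (second row) on {y=0}, encoded via the extension Hext. -/
structure Config (J1 : ℝ × ℝ → ℝ) (e0 b d r0 : ℝ) where
  h : ℝ → ℝ
  lipK : ℝ≥0
  lip : LipschitzWith lipK h
  h_nonneg : ∀ x, 0 ≤ h x
  h_outside : ∀ x, x ∉ Icc (0:ℝ) 1 → h x = 0
  h_zero : h 0 = 0
  h_one : h 1 = 0
  h_vol : (∫ x in Ioo (0:ℝ) 1, h x) = d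
  k : ℕ
  pts : Fin k → ℝ × ℝ
  pts_in : ∀ i, ball2 (pts i) r0 ⊆ Omeg h
  H : ℝ × ℝ → Mat2
  H_meas : ∀ i j, Measurable fun z => H z i j
  H_L2 : IntegrableOn (fun z => frobSq (H z)) (Omeg h) volume
  H_curl : ∀ φ : ℝ × ℝ → ℝ, ContDiff ℝ (⊤ : ℕ∞) φ → HasCompactSupport φ →
    tsupport φ ⊆ Uset h →
    ((∫ z, (Hext e0 h H z 0 0 * D2 φ z - Hext e0 h H z 0 1 * D1 φ z)) =
      ∫ z, (b * ∑ i, Jr J1 r0 (z - pts i)) * φ z) ∧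
    ((∫ z, (Hext e0 h H z 1 0 * D2 φ z - Hext e0 h H z 1 1 * D1 φ z)) = 0)


/-- Our explicit strain field. -/
def Hf (e0 l : ℝ) (z : ℝ × ℝ) : Mat2 :=
  !![e0 * etaF l z.2, e0 * etaF' l z.2 * (z.1 - 1/2); 0, 0]

lemma mem_strip_of_Uset {h : ℝ → ℝ} {z : ℝ × ℝ} (hz : z ∈ Uset h) (hno : z ∉ Omeg h) :
    0 < z.1 ∧ z.1 < 1 ∧ z.2 ≤ 0 := by
  obtain ⟨h1, h2, h3⟩ := hz
  refine ⟨h1, h2, ?_⟩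
  by_contra hpos
  push_neg at hpos
  exact hno ⟨h1, h2, hpos, h3⟩

lemma curl_row1 (e0 l : ℝ) (hl : 0 < l) (h : ℝ → ℝ) {φ : ℝ × ℝ → ℝ}
    (hφ : ContDiff ℝ (⊤ : ℕ∞) φ) (hφc : HasCompactSupport φ) (hsupp : tsupport φ ⊆ Uset h) :
    (∫ z : ℝ × ℝ, (Hext e0 h (Hf e0 l) z 0 0 * D2 φ z - Hext e0 h (Hf e0 l) z 0 1 * D1 φ z))
      = 0 := by
  have hpt : ∀ z : ℝ × ℝ,
      Hext e0 h (Hf e0 l) z 0 0 * D2 φ z - Hext e0 h (Hf e0 l) z 0 1 * D1 φ z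
        = e0 * etaF l z.2 * D2 φ z - e0 * etaF' l z.2 * (z.1 - 1/2) * D1 φ z := by
    intro z
    by_cases hz1 : z ∈ Omeg h
    · simp [Hext, hz1, Hf]
    · by_cases hz2 : 0 < z.1 ∧ z.1 < 1 ∧ z.2 ≤ 0
      · have e1 : etaF l z.2 = 1 := etaF_one hl (by linarith [hz2.2.2, hl])
        have e2 : etaF' l z.2 = 0 := etaF'_zero_lt hl (by linarith [hz2.2.2, hl])
        simp [Hext, hz1, hz2, e1, e2]
      · have hznot : z ∉ tsupport φ := fun hmem => hz2 (mem_strip_of_Uset (hsupp hmem) hz1)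
        have hD : fderiv ℝ φ z = 0 := fderiv_zero_outside hznot
        simp [Hext, hz1, hz2, D1, D2, hD]
  rw [integral_congr_ae (Filter.Eventually.of_forall hpt)]
  exact key_integral e0 l hφ hφc

lemma curl_row2 (e0 l : ℝ) (h : ℝ → ℝ) {φ : ℝ × ℝ → ℝ} :
    (∫ z : ℝ × ℝ, (Hext e0 h (Hf e0 l) z 1 0 * D2 φ z - Hext e0 h (Hf e0 l) z 1 1 * D1 φ z))
      = 0 := by
  have hpt : ∀ z : ℝ × ℝ,
      Hext e0 h (Hf e0 l) z 1 0 * D2 φ z - Hext e0 h (Hf e0 l) z 1 1 * D1 φ z = 0 := by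
    intro z
    by_cases hz1 : z ∈ Omeg h
    · simp [Hext, hz1, Hf]
    · by_cases hz2 : 0 < z.1 ∧ z.1 < 1 ∧ z.2 ≤ 0
      · simp [Hext, hz1, hz2]
      · simp [Hext, hz1, hz2]
  rw [integral_congr_ae (Filter.Eventually.of_forall hpt)]
  simp



/-- The island profile: a triangle of base [ (1-l)/2, (1+l)/2 ], area d. -/
def prof (d l x : ℝ) : ℝ := (4*d/l^2) * max 0 (l/2 - |x - 1/2|)

section prof
variable {d l : ℝ} (hl : 0 < l) (hl1 : l ≤ 1) (hd : 0 < d)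

include hl hd in
lemma prof_nonneg (x : ℝ) : 0 ≤ prof d l x :=
  mul_nonneg (by positivity) (le_max_left _ _)

lemma prof_cont : Continuous (prof d l) :=
  continuous_const.mul (continuous_const.max
    (continuous_const.sub (continuous_id.sub continuous_const).abs))

include hl hd in
lemma prof_zero_outside {x : ℝ} (hx : l/2 ≤ |x - 1/2|) : prof d l x = 0 := by
  have h0 : l/2 - |x - 1/2| ≤ 0 := by linarith
  unfold prof
  rw [max_eq_left h0, mul_zero]

include hl hd in
lemma prof_lip : LipschitzWith (Real.toNNReal (4*d/l^2)) (prof d l) := by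
  refine LipschitzWith.of_dist_le_mul fun x y => ?_
  have hm : (0:ℝ) ≤ 4*d/l^2 := by positivity
  have coe : ((Real.toNNReal (4*d/l^2)) : ℝ) = 4*d/l^2 := Real.coe_toNNReal _ hm
  rw [Real.dist_eq, Real.dist_eq, coe]
  unfold prof
  rw [← mul_sub, abs_mul, abs_of_nonneg hm]
  have h1 : |max 0 (l/2 - |x - 1/2|) - max 0 (l/2 - |y - 1/2|)| ≤ |x - y| := by
    rw [max_comm 0 (l/2 - |x - 1/2|), max_comm 0 (l/2 - |y - 1/2|)]
    calc |max (l/2 - |x - 1/2|) 0 - max (l/2 - |y - 1/2|) 0|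
        ≤ |(l/2 - |x - 1/2|) - (l/2 - |y - 1/2|)| := abs_max_sub_max_le_abs _ _ _
      _ = |(|y - 1/2| - |x - 1/2|)| := by ring_nf
      _ ≤ |(y - 1/2) - (x - 1/2)| := abs_abs_sub_abs_le_abs_sub _ _
      _ = |x - y| := by rw [show (y - 1/2) - (x - 1/2) = -(x - y) by ring, abs_neg]
  exact mul_le_mul_of_nonneg_left h1 hm

include hl hd in
lemma prof_deriv_bound (x : ℝ) : |deriv (prof d l) x| ≤ 4*d/l^2 := by
  have := norm_deriv_le_of_lipschitz (𝕜 := ℝ) (prof_lip hl hd) (x₀ := x)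
  rwa [Real.norm_eq_abs, Real.coe_toNNReal _ (by positivity : (0:ℝ) ≤ 4*d/l^2)] at this

include hl hd in
lemma prof_deriv_flat {x : ℝ} (hx : l/2 < |x - 1/2|) : deriv (prof d l) x = 0 := by
  have hopen : IsOpen {u : ℝ | l/2 < |u - 1/2|} :=
    isOpen_lt continuous_const (continuous_id.sub continuous_const).abs
  have hev : prof d l =ᶠ[nhds x] (fun _ => (0:ℝ)) := by
    filter_upwards [hopen.mem_nhds hx] with u hu
    exact prof_zero_outside hl hd (le_of_lt hu)
  rw [hev.deriv_eq]
  exact deriv_const x 0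

include hl hd in
lemma prof_mem_island {z : ℝ × ℝ} (hz : z ∈ Omeg (prof d l)) : |z.1 - 1/2| < l/2 := by
  obtain ⟨_, _, h3, h4⟩ := hz
  by_contra hcon
  push_neg at hcon
  rw [prof_zero_outside hl hd hcon] at h4
  linarith

include hl hd in
lemma prof_height (x : ℝ) : prof d l x ≤ 2*d/l := by
  have h1 : max 0 (l/2 - |x - 1/2|) ≤ l/2 := by
    apply max_le (by positivity)
    have : (0:ℝ) ≤ |x - 1/2| := abs_nonneg _
    linarith
  calc prof d l x ≤ (4*d/l^2) * (l/2) := mul_le_mul_of_nonneg_left h1 (by positivity)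
    _ = 2*d/l := by field_simp; ring

include hl hl1 hd in
lemma prof_vol : (∫ x in Ioo (0:ℝ) 1, prof d l x) = d := by
  have ha0 : (0:ℝ) ≤ (1-l)/2 := by linarith
  have hb1 : (1+l)/2 ≤ 1 := by linarith
  have hint : ∀ u v : ℝ, IntervalIntegrable (prof d l) volume u v :=
    fun u v => prof_cont.intervalIntegrable u v
  rw [← integral_Ioc_eq_integral_Ioo,
    ← intervalIntegral.integral_of_le (zero_le_one (α := ℝ))]
  have s1 : ∫ x in (0:ℝ)..((1-l)/2), prof d l x = 0 := by
    rw [intervalIntegral.integral_congr (g := fun _ => (0:ℝ)) ?_]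
    · simp
    · intro x hx
      rw [uIcc_of_le ha0] at hx
      apply prof_zero_outside hl hd
      have : 1/2 - x ≤ |x - 1/2| := by
        rw [show (1/2 - x : ℝ) = -(x - 1/2) by ring]
        exact neg_le_abs _
      have := hx.2
      linarith
  have s4 : ∫ x in ((1+l)/2)..(1:ℝ), prof d l x = 0 := by
    rw [intervalIntegral.integral_congr (g := fun _ => (0:ℝ)) ?_]
    · simp
    · intro x hx
      rw [uIcc_of_le hb1] at hx
      apply prof_zero_outside hl hd
      have : x - 1/2 ≤ |x - 1/2| := le_abs_self _
      have := hx.1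
      linarith
  have s2 : ∫ x in ((1-l)/2)..(1/2:ℝ), prof d l x = (4*d/l^2) * (l^2/8) := by
    have hcg : EqOn (prof d l) (fun x => (4*d/l^2) * (x - (1-l)/2)) (uIcc ((1-l)/2) (1/2)) := by
      intro x hx
      rw [uIcc_of_le (by linarith)] at hx
      have hxle : x ≤ 1/2 := hx.2
      have habs : |x - 1/2| = 1/2 - x := by rw [abs_of_nonpos (by linarith)]; ring
      have hmax : max 0 (l/2 - (1/2 - x)) = x - (1-l)/2 := by
        rw [max_eq_right (by linarith [hx.1])]; ring
      unfold prof
      rw [habs, hmax]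
    rw [intervalIntegral.integral_congr hcg, intervalIntegral.integral_const_mul]
    rw [intervalIntegral.integral_comp_sub_right (fun u => u) ((1-l)/2), integral_id]
    congr 1
    ring
  have s3 : ∫ x in (1/2:ℝ)..((1+l)/2), prof d l x = (4*d/l^2) * (l^2/8) := by
    have hcg : EqOn (prof d l) (fun x => (4*d/l^2) * ((1+l)/2 - x)) (uIcc (1/2) ((1+l)/2)) := by
      intro x hx
      rw [uIcc_of_le (by linarith)] at hx
      have hxge : 1/2 ≤ x := hx.1
      have habs : |x - 1/2| = x - 1/2 := abs_of_nonneg (by linarith)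
      have hmax : max 0 (l/2 - (x - 1/2)) = (1+l)/2 - x := by
        rw [max_eq_right (by linarith [hx.2])]; ring
      unfold prof
      rw [habs, hmax]
    rw [intervalIntegral.integral_congr hcg, intervalIntegral.integral_const_mul]
    rw [intervalIntegral.integral_comp_sub_left (fun u => u) ((1+l)/2), integral_id]
    congr 1
    ring
  have t1 := intervalIntegral.integral_add_adjacent_intervals
    (hint 0 ((1-l)/2)) (hint ((1-l)/2) (1/2))
  have t2 := intervalIntegral.integral_add_adjacent_intervals
    (hint (1/2) ((1+l)/2)) (hint ((1+l)/2) 1)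
  have t3 := intervalIntegral.integral_add_adjacent_intervals (hint 0 (1/2)) (hint (1/2) 1)
  rw [← t3, ← t1, ← t2, s1, s2, s3, s4]
  field_simp
  ring

end prof

/-- Surface energy integrand ∫₀¹ √(1+|h'|²). -/
def surfaceE (h : ℝ → ℝ) : ℝ := ∫ x in Ioo (0:ℝ) 1, Real.sqrt (1 + (deriv h x)^2)


lemma sqrt_one_add_sq_le (t : ℝ) : Real.sqrt (1 + t^2) ≤ 1 + |t| := by
  rw [show (1 + |t| : ℝ) = Real.sqrt ((1 + |t|)^2) by
    rw [Real.sqrt_sq (by positivity)]]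
  apply Real.sqrt_le_sqrt
  nlinarith [abs_nonneg t, sq_abs t]

section surf
variable {d l : ℝ} (hl : 0 < l) (hl1 : l ≤ 1) (hd : 0 < d)

include hl hl1 hd in
lemma surface_bound : surfaceE (prof d l) ≤ 1 + 4*d/l := by
  set m := 4*d/l^2 with hm
  have hm0 : 0 ≤ m := by positivity
  set g : ℝ → ℝ := fun x => 1 + m * (Icc ((1-l)/2) ((1+l)/2)).indicator (fun _ => (1:ℝ)) x
    with hg
  have hptw : ∀ x ∈ Ioo (0:ℝ) 1, Real.sqrt (1 + (deriv (prof d l) x)^2) ≤ g x := by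
    intro x _
    by_cases hmem : x ∈ Icc ((1-l)/2) ((1+l)/2)
    · have hb := prof_deriv_bound hl hd x
      calc Real.sqrt (1 + (deriv (prof d l) x)^2) ≤ 1 + |deriv (prof d l) x| :=
            sqrt_one_add_sq_le _
        _ ≤ 1 + m * 1 := by rw [mul_one]; linarith
        _ = g x := by rw [hg]; simp [indicator_of_mem hmem]
    · have hflat : deriv (prof d l) x = 0 := by
        apply prof_deriv_flat hl hd
        simp only [mem_Icc, not_and_or, not_le] at hmem
        rcases hmem with hmem | hmem
        · have : 1/2 - x ≤ |x - 1/2| := by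
            rw [show (1/2 - x : ℝ) = -(x - 1/2) by ring]; exact neg_le_abs _
          linarith
        · have : x - 1/2 ≤ |x - 1/2| := le_abs_self _
          linarith
      rw [hflat]
      have : g x = 1 + m * 0 := by rw [hg]; simp [indicator_of_notMem hmem]
      rw [this]
      simp
  have hvol : volume (Ioo (0:ℝ) 1) ≠ ⊤ := by
    rw [Real.volume_Ioo]; exact ENNReal.ofReal_ne_top
  have hmes : Measurable fun x => Real.sqrt (1 + (deriv (prof d l) x)^2) :=
    (measurable_const.add ((measurable_deriv (prof d l)).pow_const 2)).sqrt
  have hint1 : IntegrableOn (fun x => Real.sqrt (1 + (deriv (prof d l) x)^2))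
      (Ioo (0:ℝ) 1) := by
    apply Measure.integrableOn_of_bounded hvol hmes.aestronglyMeasurable (M := 1 + m)
    filter_upwards with x
    rw [Real.norm_eq_abs, abs_of_nonneg (Real.sqrt_nonneg _)]
    have hb := prof_deriv_bound hl hd x
    calc Real.sqrt (1 + (deriv (prof d l) x)^2) ≤ 1 + |deriv (prof d l) x| :=
          sqrt_one_add_sq_le _
      _ ≤ 1 + m := by linarith
  have hIcc_int : Integrable ((Icc ((1-l)/2) ((1+l)/2)).indicator (fun _ => (1:ℝ))) :=
    (integrable_indicator_iff measurableSet_Icc).mpr (integrableOn_const (by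
      rw [Real.volume_Icc]; exact ENNReal.ofReal_ne_top))
  have hOoo_int : IntegrableOn (fun _ : ℝ => (1:ℝ)) (Ioo (0:ℝ) 1) :=
    integrableOn_const (by rw [Real.volume_Ioo]; exact ENNReal.ofReal_ne_top)
  have hint2 : IntegrableOn g (Ioo (0:ℝ) 1) :=
    hOoo_int.add ((hIcc_int.const_mul m).integrableOn)
  have hmono := setIntegral_mono_on hint1 hint2 measurableSet_Ioo hptw
  have hg_int : ∫ x in Ioo (0:ℝ) 1, g x ≤ 1 + m * l := by
    rw [hg]
    rw [integral_add hOoo_int ((hIcc_int.const_mul m).integrableOn)]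
    rw [integral_const_mul, setIntegral_const, setIntegral_indicator measurableSet_Icc,
      setIntegral_const]
    simp only [measureReal_def]
    rw [Real.volume_Ioo]
    have hle : (volume (Ioo (0:ℝ) 1 ∩ Icc ((1-l)/2) ((1+l)/2))).toReal ≤ l := by
      have h1 : volume (Ioo (0:ℝ) 1 ∩ Icc ((1-l)/2) ((1+l)/2))
          ≤ volume (Icc ((1-l)/2) ((1+l)/2)) := measure_mono inter_subset_right
      have h2 : volume (Icc ((1-l)/2) ((1+l)/2)) = ENNReal.ofReal l := by
        rw [Real.volume_Icc]; congr 1; ring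
      calc (volume (Ioo (0:ℝ) 1 ∩ Icc ((1-l)/2) ((1+l)/2))).toReal
          ≤ (ENNReal.ofReal l).toReal := ENNReal.toReal_mono ENNReal.ofReal_ne_top (h2 ▸ h1)
        _ = l := ENNReal.toReal_ofReal (le_of_lt hl)
    have hml : m * (volume (Ioo (0:ℝ) 1 ∩ Icc ((1-l)/2) ((1+l)/2))).toReal ≤ m * l :=
      mul_le_mul_of_nonneg_left hle hm0
    simp only [smul_eq_mul, mul_one]
    norm_num
    linarith
  have hfin : 1 + m * l = 1 + 4*d/l := by rw [hm]; field_simp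
  calc surfaceE (prof d l) ≤ ∫ x in Ioo (0:ℝ) 1, g x := hmono
    _ ≤ 1 + m * l := hg_int
    _ = 1 + 4*d/l := hfin

end surf


lemma frobSq_nonneg (M : Mat2) : 0 ≤ frobSq M := by
  unfold frobSq
  positivity

lemma frobSq_Hf (e0 l : ℝ) (z : ℝ × ℝ) :
    frobSq (Hf e0 l z) = (e0 * etaF l z.2)^2 + (e0 * etaF' l z.2 * (z.1-1/2))^2 := by
  simp [Hf, frobSq, Fin.sum_univ_two, Matrix.cons_val_zero, Matrix.cons_val_one,
    Matrix.head_cons]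

lemma frobSq_matSym_Hf (e0 l : ℝ) (z : ℝ × ℝ) :
    frobSq (matSym (Hf e0 l z))
      = (e0 * etaF l z.2)^2 + (e0 * etaF' l z.2 * (z.1-1/2))^2/2 := by
  simp [Hf, frobSq, matSym, Fin.sum_univ_two, Matrix.transpose_apply, Matrix.cons_val_zero,
    Matrix.cons_val_one, Matrix.head_cons, Matrix.head_fin_const, Matrix.vecHead, Matrix.vecTail]
  ring

lemma omeg_open {h : ℝ → ℝ} (hc : Continuous h) : IsOpen (Omeg h) := by
  have : Omeg h = ({p : ℝ × ℝ | 0 < p.1} ∩ {p | p.1 < 1}) ∩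
      ({p | 0 < p.2} ∩ {p | p.2 < h p.1}) := by
    ext z; simp [Omeg]; tauto
  rw [this]
  exact (((isOpen_lt continuous_const continuous_fst).inter
    (isOpen_lt continuous_fst continuous_const)).inter
    ((isOpen_lt continuous_const continuous_snd).inter
      (isOpen_lt continuous_snd (hc.comp continuous_fst))))

section elastic
variable {e0 d l M0 : ℝ} (hl : 0 < l) (hd : 0 < d)
  (hM : ∀ u, |deriv Real.smoothTransition u| ≤ M0)

include hl hd in
lemma omeg_subset_rect :
    Omeg (prof d l) ⊆ Ioo ((1-l)/2) ((1+l)/2) ×ˢ Ioc 0 (2*d/l) := by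
  intro z hz
  have hx := prof_mem_island hl hd hz
  rw [abs_lt] at hx
  obtain ⟨_, _, h3, h4⟩ := hz
  exact ⟨⟨by linarith [hx.1], by linarith [hx.2]⟩, h3,
    le_trans (le_of_lt h4) (prof_height hl hd z.1)⟩

include hl hd in
lemma omeg_vol_fin : volume (Omeg (prof d l)) ≠ ⊤ := by
  have h := measure_mono (μ := (volume : Measure (ℝ × ℝ))) (omeg_subset_rect hl hd)
  refine ne_top_of_le_ne_top ?_ h
  rw [Measure.volume_eq_prod, Measure.prod_prod, Real.volume_Ioo, Real.volume_Ioc]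
  exact ENNReal.mul_ne_top ENNReal.ofReal_ne_top ENNReal.ofReal_ne_top

include hM in
lemma hM0_nonneg : 0 ≤ M0 := le_trans (abs_nonneg _) (hM 0)

include hl hd hM in
lemma frob_bound_on {z : ℝ × ℝ} (hz : z ∈ Omeg (prof d l)) :
    frobSq (matSym (Hf e0 l z))
      ≤ (e0^2*(1+M0^2/2)) * (Ioc (0:ℝ) l).indicator (fun _ => (1:ℝ)) z.2 := by
  have hM0 : 0 ≤ M0 := hM0_nonneg hM
  obtain ⟨hz1, hz2, hz3, hz4⟩ := hz
  rcases le_or_gt z.2 l with hyl | hyl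
  · have hind : (Ioc (0:ℝ) l).indicator (fun _ => (1:ℝ)) z.2 = 1 :=
      indicator_of_mem (mem_Ioc.mpr ⟨hz3, hyl⟩) _
    rw [hind, frobSq_matSym_Hf, mul_one]
    have h1 : (etaF l z.2)^2 ≤ 1 := by
      have := etaF_nonneg l z.2
      have := etaF_le_one l z.2
      nlinarith
    have h2 : (etaF' l z.2 * (z.1-1/2))^2 ≤ M0^2 := by
      have habs : |etaF' l z.2 * (z.1-1/2)| ≤ M0 := by
        rw [abs_mul]
        calc |etaF' l z.2| * |z.1-1/2| ≤ (2*M0/l) * (l/2) := by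
              apply mul_le_mul (etaF'_bound hl hM z.2)
                (le_of_lt (prof_mem_island hl hd ⟨hz1, hz2, hz3, hz4⟩)) (abs_nonneg _)
                (by positivity)
          _ = M0 := by field_simp
      calc (etaF' l z.2 * (z.1-1/2))^2 = |etaF' l z.2 * (z.1-1/2)|^2 := (sq_abs _).symm
        _ ≤ M0^2 := by nlinarith [abs_nonneg (etaF' l z.2 * (z.1-1/2))]
    have he2 : (0:ℝ) ≤ e0^2 := sq_nonneg _
    calc (e0 * etaF l z.2)^2 + (e0 * etaF' l z.2 * (z.1-1/2))^2/2
        = e0^2 * (etaF l z.2)^2 + e0^2 * (etaF' l z.2 * (z.1-1/2))^2 / 2 := by ring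
      _ ≤ e0^2 * 1 + e0^2 * M0^2 / 2 := by
          have := mul_le_mul_of_nonneg_left h1 he2
          have := mul_le_mul_of_nonneg_left h2 he2
          linarith
      _ = e0^2*(1+M0^2/2) := by ring
  · have hz1 : etaF l z.2 = 0 := etaF_zero hl (le_of_lt hyl)
    have hz2 : etaF' l z.2 = 0 := etaF'_zero_gt hl hyl
    rw [frobSq_matSym_Hf, hz1, hz2]
    have : (0:ℝ) ≤ (e0^2*(1+M0^2/2)) * (Ioc (0:ℝ) l).indicator (fun _ => (1:ℝ)) z.2 := by
      apply mul_nonneg (by positivity)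
      exact indicator_nonneg (fun _ _ => zero_le_one) _
    simpa using this

include hl hd hM in
lemma HL2_on_omeg : IntegrableOn (fun z => frobSq (Hf e0 l z)) (Omeg (prof d l)) volume := by
  have hmes : Measurable fun z : ℝ × ℝ => frobSq (Hf e0 l z) := by
    have : (fun z : ℝ × ℝ => frobSq (Hf e0 l z))
        = fun z => (e0 * etaF l z.2)^2 + (e0 * etaF' l z.2 * (z.1-1/2))^2 := by
      funext z; exact frobSq_Hf e0 l z
    rw [this]
    exact (((continuous_const.mul ((etaF_cont l).comp continuous_snd)).pow 2).add
      (((continuous_const.mul ((etaF'_cont l).comp continuous_snd)).mul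
        (continuous_fst.sub continuous_const)).pow 2)).measurable
  apply Measure.integrableOn_of_bounded (omeg_vol_fin hl hd) hmes.aestronglyMeasurable
    (M := e0^2 + e0^2 * M0^2)
  apply ae_restrict_of_forall_mem (omeg_open prof_cont).measurableSet
  intro z hz
  have hM0 : 0 ≤ M0 := hM0_nonneg hM
  rw [Real.norm_eq_abs, abs_of_nonneg (frobSq_nonneg _), frobSq_Hf]
  have h1 : (etaF l z.2)^2 ≤ 1 := by
    have := etaF_nonneg l z.2; have := etaF_le_one l z.2; nlinarith
  have h2 : (etaF' l z.2 * (z.1-1/2))^2 ≤ M0^2 := by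
    rcases le_or_gt z.2 l with hyl | hyl
    · have habs : |etaF' l z.2 * (z.1-1/2)| ≤ M0 := by
        rw [abs_mul]
        calc |etaF' l z.2| * |z.1-1/2| ≤ (2*M0/l) * (l/2) := by
              apply mul_le_mul (etaF'_bound hl hM z.2)
                (le_of_lt (prof_mem_island hl hd hz)) (abs_nonneg _) (by positivity)
          _ = M0 := by field_simp
      calc (etaF' l z.2 * (z.1-1/2))^2 = |etaF' l z.2 * (z.1-1/2)|^2 := (sq_abs _).symm
        _ ≤ M0^2 := by nlinarith [abs_nonneg (etaF' l z.2 * (z.1-1/2))]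
    · rw [etaF'_zero_gt hl hyl]
      nlinarith
  nlinarith [sq_nonneg e0]

end elastic

/-- Total energy F(h,H,σ) = γ∫√(1+h'²) + ∫_{Ω_h} W(H) + k b². -/
def energy (γ : ℝ) (W : Mat2 → ℝ) {J1 : ℝ × ℝ → ℝ} {e0 b d r0 : ℝ}
    (c : Config J1 e0 b d r0) : ℝ :=
  γ * surfaceE c.h + (∫ z in Omeg c.h, W (c.H z)) + (c.k : ℝ) * b^2

/-- Quadratic growth condition c₁|M_sym|² ≤ W(M) ≤ c₁⁻¹|M_sym|². -/
def WGrowth (c1 : ℝ) (W : Mat2 → ℝ) : Prop :=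
  ∀ M : Mat2, c1 * frobSq (matSym M) ≤ W M ∧ W M ≤ c1⁻¹ * frobSq (matSym M)

lemma elastic_int_bound {d l M0 : ℝ} (hl : 0 < l) (hd : 0 < d)
    (hM : ∀ u, |deriv Real.smoothTransition u| ≤ M0) {e0 c1 : ℝ} (hc1 : 0 < c1) {W : Mat2 → ℝ} (hW : WGrowth c1 W) :
    (∫ z in Omeg (prof d l), W (Hf e0 l z)) ≤ c1⁻¹ * (e0^2*(1+M0^2/2)) * l^2 := by
  have hM0 : 0 ≤ M0 := hM0_nonneg hM
  set C := e0^2*(1+M0^2/2) with hC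
  have hC0 : 0 ≤ C := by rw [hC]; positivity
  by_cases hInt : IntegrableOn (fun z => W (Hf e0 l z)) (Omeg (prof d l)) volume
  swap
  · rw [integral_undef hInt]
    have : (0:ℝ) ≤ c1⁻¹ * C * l^2 := by positivity
    linarith
  set S : Set (ℝ × ℝ) := {z : ℝ × ℝ | z.2 ∈ Ioc (0:ℝ) l} with hS
  have hSmeas : MeasurableSet S := measurable_snd measurableSet_Ioc
  set g2 : ℝ × ℝ → ℝ :=
    fun z => c1⁻¹ * C * (Ioc (0:ℝ) l).indicator (fun _ => (1:ℝ)) z.2 with hg2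
  have hindle : ∀ z : ℝ × ℝ, 0 ≤ (Ioc (0:ℝ) l).indicator (fun _ => (1:ℝ)) z.2
      ∧ (Ioc (0:ℝ) l).indicator (fun _ => (1:ℝ)) z.2 ≤ 1 := by
    intro z
    constructor
    · exact indicator_nonneg (fun _ _ => zero_le_one) _
    · classical
      by_cases h : z.2 ∈ Ioc (0:ℝ) l <;> simp [indicator, h]
  have hpt : ∀ z ∈ Omeg (prof d l), W (Hf e0 l z) ≤ g2 z := by
    intro z hz
    calc W (Hf e0 l z) ≤ c1⁻¹ * frobSq (matSym (Hf e0 l z)) := (hW _).2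
      _ ≤ c1⁻¹ * (C * (Ioc (0:ℝ) l).indicator (fun _ => (1:ℝ)) z.2) :=
          mul_le_mul_of_nonneg_left (frob_bound_on hl hd hM hz)
            (inv_nonneg.mpr (le_of_lt hc1))
      _ = g2 z := by rw [hg2]; ring
  have hg2meas : Measurable g2 :=
    measurable_const.mul ((measurable_const.indicator measurableSet_Ioc).comp measurable_snd)
  have hg2int : IntegrableOn g2 (Omeg (prof d l)) volume := by
    apply Measure.integrableOn_of_bounded (omeg_vol_fin hl hd) hg2meas.aestronglyMeasurable
      (M := c1⁻¹ * C)
    filter_upwards with z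
    rw [hg2, Real.norm_eq_abs]
    have h1 := (hindle z).1
    have h2 := (hindle z).2
    rw [abs_of_nonneg (by positivity)]
    calc c1⁻¹ * C * (Ioc (0:ℝ) l).indicator (fun _ => (1:ℝ)) z.2
        ≤ c1⁻¹ * C * 1 := by
          apply mul_le_mul_of_nonneg_left h2 (by positivity)
      _ = c1⁻¹ * C := mul_one _
  have hstep := setIntegral_mono_on hInt hg2int (omeg_open prof_cont).measurableSet hpt
  have hrw : (fun z : ℝ × ℝ => (Ioc (0:ℝ) l).indicator (fun _ => (1:ℝ)) z.2)
      = S.indicator (fun _ => (1:ℝ)) := by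
    funext z
    by_cases h : z.2 ∈ Ioc (0:ℝ) l
    · rw [indicator_of_mem h, indicator_of_mem (show z ∈ S from h)]
    · rw [indicator_of_notMem h, indicator_of_notMem (show z ∉ S from h)]
  have hcomp : ∫ z in Omeg (prof d l), g2 z
      = c1⁻¹ * C * (volume (Omeg (prof d l) ∩ S)).toReal := by
    rw [hg2]
    calc ∫ z in Omeg (prof d l), c1⁻¹ * C * (Ioc (0:ℝ) l).indicator (fun _ => (1:ℝ)) z.2
        = ∫ z in Omeg (prof d l), c1⁻¹ * C * S.indicator (fun _ => (1:ℝ)) z := by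
          apply setIntegral_congr_fun (omeg_open prof_cont).measurableSet
          intro z _
          simp only []
          rw [congrFun hrw z]
      _ = c1⁻¹ * C * ∫ z in Omeg (prof d l), S.indicator (fun _ => (1:ℝ)) z :=
          integral_const_mul _ _
      _ = c1⁻¹ * C * (volume (Omeg (prof d l) ∩ S)).toReal := by
          rw [setIntegral_indicator hSmeas, setIntegral_const, smul_eq_mul, mul_one, measureReal_def]
  have hsub : Omeg (prof d l) ∩ S ⊆ Ioo ((1-l)/2) ((1+l)/2) ×ˢ Ioc (0:ℝ) l := by
    intro z hz
    have hx := prof_mem_island hl hd hz.1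
    rw [abs_lt] at hx
    exact ⟨mem_Ioo.mpr ⟨by linarith [hx.1], by linarith [hx.2]⟩, hz.2⟩
  have hvle : (volume (Omeg (prof d l) ∩ S)).toReal ≤ l^2 := by
    have h1 : volume (Omeg (prof d l) ∩ S)
        ≤ volume (Ioo ((1-l)/2) ((1+l)/2) ×ˢ Ioc (0:ℝ) l) :=
      measure_mono (μ := (volume : Measure (ℝ × ℝ))) hsub
    have h2 : volume (Ioo ((1-l)/2) ((1+l)/2) ×ˢ Ioc (0:ℝ) l)
        = ENNReal.ofReal l * ENNReal.ofReal l := by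
      rw [Measure.volume_eq_prod, Measure.prod_prod, Real.volume_Ioo, Real.volume_Ioc]
      congr 2
      · ring
      · ring
    calc (volume (Omeg (prof d l) ∩ S)).toReal
        ≤ (ENNReal.ofReal l * ENNReal.ofReal l).toReal :=
          ENNReal.toReal_mono
            (ENNReal.mul_ne_top ENNReal.ofReal_ne_top ENNReal.ofReal_ne_top) (h2 ▸ h1)
      _ = l * l := by
          rw [ENNReal.toReal_mul, ENNReal.toReal_ofReal (le_of_lt hl)]
      _ = l^2 := by ring
  calc (∫ z in Omeg (prof d l), W (Hf e0 l z)) ≤ ∫ z in Omeg (prof d l), g2 z := hstep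
    _ = c1⁻¹ * C * (volume (Omeg (prof d l) ∩ S)).toReal := hcomp
    _ ≤ c1⁻¹ * C * l^2 := mul_le_mul_of_nonneg_left hvle (by positivity)

/-- The scaling function s(γ,e₀,b,d,r₀). -/
def scalingS (γ e0 b d r0 : ℝ) : ℝ :=
  γ * (1 + d) +
    min ((γ * e0 * d) ^ ((2:ℝ)/3))
      (Real.sqrt (γ * e0 * b * d * (1 + Real.log (b / (e0 * r0)))))


lemma Hf_meas (e0 l : ℝ) : ∀ i j, Measurable fun z => Hf e0 l z i j := by
  have c1 : Continuous fun z : ℝ × ℝ => e0 * etaF l z.2 :=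
    continuous_const.mul ((etaF_cont l).comp continuous_snd)
  have c2 : Continuous fun z : ℝ × ℝ => e0 * etaF' l z.2 * (z.1 - 1/2) :=
    (continuous_const.mul ((etaF'_cont l).comp continuous_snd)).mul
      (continuous_fst.sub continuous_const)
  intro i j
  fin_cases i <;> fin_cases j <;> simp only [Hf, Fin.zero_eta, Fin.mk_one,
    Matrix.cons_val', Matrix.cons_val_zero, Matrix.cons_val_one, Matrix.head_cons,
    Matrix.empty_val', Matrix.cons_val_fin_one, Matrix.head_fin_const]
  exacts [c1.measurable, c2.measurable, measurable_const, measurable_const]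


lemma cbrt_cube {c : ℝ} (hc : 0 ≤ c) : ((c^3 : ℝ)) ^ ((1:ℝ)/3) = c := by
  rw [← Real.rpow_natCast c 3, ← Real.rpow_mul hc]
  norm_num

lemma cube_eq {a b : ℝ} (ha : 0 ≤ a) (hb : 0 ≤ b) (h : a^3 = b^3) : a = b := by
  have := cbrt_cube ha
  rw [h, cbrt_cube hb] at this
  exact this.symm

lemma rpow_cube {x : ℝ} (hx : 0 ≤ x) (p : ℝ) : (x ^ p)^3 = x ^ (3*p) := by
  rw [← Real.rpow_natCast (x ^ p) 3, ← Real.rpow_mul hx]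
  norm_num
  rw [mul_comm]

lemma cube_le {a b : ℝ} (ha : 0 ≤ a) (hb : 0 ≤ b) (h : a^3 ≤ b^3) : a ≤ b := by
  by_contra hc
  push_neg at hc
  have ha' : 0 < a := lt_of_le_of_lt hb hc
  nlinarith [mul_pos ha' ha', mul_nonneg hb hb, mul_nonneg ha hb]

lemma final_arith {γ d e0 K : ℝ} (hγ : 0 < γ) (hd : 0 < d) (he0 : 0 < e0) (hK : 0 ≤ K) :
    γ*(1 + 4*d/(min 1 ((γ*d/e0^2) ^ ((1:ℝ)/3))))
      + K*e0^2*(min 1 ((γ*d/e0^2) ^ ((1:ℝ)/3)))^2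
      ≤ (5 + K) * (γ*(1+d) + (e0*γ*d) ^ ((2:ℝ)/3)) := by
  set P := (γ*d/e0^2) ^ ((1:ℝ)/3) with hPdef
  have hbase : (0:ℝ) < γ*d/e0^2 := by positivity
  have hP : 0 < P := Real.rpow_pos_of_pos hbase _
  have hP3 : P^3 = γ*d/e0^2 := by
    rw [hPdef, rpow_cube (le_of_lt hbase)]
    norm_num
  set B := (e0*γ*d) ^ ((2:ℝ)/3) with hBdef
  have hB : 0 < B := Real.rpow_pos_of_pos (by positivity) _
  have hB3 : B^3 = (e0*γ*d)^2 := by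
    rw [hBdef, rpow_cube (by positivity)]
    rw [show (3*((2:ℝ)/3)) = ((2:ℕ):ℝ) by norm_num, Real.rpow_natCast]
  have hA : 0 < γ*(1+d) := by positivity
  rcases le_total P 1 with hP1 | hP1
  · -- l = P
    have hlP : min 1 P = P := min_eq_right hP1
    rw [hlP]
    have key1 : γ*d/P = B := by
      apply cube_eq (by positivity) (le_of_lt hB)
      rw [div_pow, hB3]
      rw [show (γ*d)^3 = (γ*d)^2 * (γ*d) by ring]
      rw [hP3]
      field_simp
    have key2 : e0^2*P^2 = B := by
      apply cube_eq (by positivity) (le_of_lt hB)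
      rw [mul_pow, hB3, show (P^2)^3 = (P^3)^2 by ring, hP3]
      field_simp
    have e1 : γ*(1 + 4*d/P) = γ + 4*(γ*d/P) := by field_simp
    have e2 : K*e0^2*P^2 = K*B := by rw [mul_assoc, key2]
    rw [e1, e2, key1]
    nlinarith [mul_nonneg hK (le_of_lt hB), mul_nonneg hK (le_of_lt hA)]
  · -- l = 1
    have hlP : min 1 P = 1 := min_eq_left hP1
    rw [hlP]
    have hX : e0^2 ≤ γ*d := by
      have h3 : (1:ℝ) ≤ P^3 := one_le_pow₀ hP1
      rw [hP3] at h3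
      have := (one_le_div (by positivity : (0:ℝ) < e0^2)).mp h3
      linarith
    have hBe : e0^2 ≤ B := by
      apply cube_le (by positivity) (le_of_lt hB) ?_
      rw [hB3]
      calc (e0^2)^3 = e0^2 * (e0^2)^2 := by ring
        _ ≤ e0^2 * (γ*d)^2 := by
            have h2 : (e0^2)^2 ≤ (γ*d)^2 := by
              nlinarith [mul_nonneg (sub_nonneg.mpr hX)
                (add_nonneg (sq_nonneg e0) (le_of_lt (mul_pos hγ hd)))]
            exact mul_le_mul_of_nonneg_left h2 (sq_nonneg e0)
        _ = (e0*γ*d)^2 := by ring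
    nlinarith [mul_nonneg hK (le_of_lt hB), mul_nonneg hK (le_of_lt hA), mul_pos hγ hd]


/-- Proposition (upper bound, part (ii)): there is c_s > 0 such that for all positive
    parameters there is an admissible configuration with no dislocations (k = 0) and
    F ≤ c_s (γ(1+d) + (e₀γd)^{2/3}). -/
theorem upper_bound_no_dislocations (J1 : ℝ × ℝ → ℝ) (hJ : Mollifier J1)
    (c1 : ℝ) (hc1 : 0 < c1) (W : Mat2 → ℝ) (hW : WGrowth c1 W) :
    ∃ cs : ℝ, 0 < cs ∧
      ∀ e0 b γ d r0 : ℝ, 0 < e0 → 0 < b → 0 < γ → 0 < d → 0 < r0 →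
        ∃ c : Config J1 e0 b d r0, c.k = 0 ∧
          energy γ W c ≤ cs * (γ * (1 + d) + (e0 * γ * d) ^ ((2:ℝ)/3)) := by
  obtain ⟨M0, hM0, hM⟩ := exists_M0
  refine ⟨5 + c1⁻¹*(1+M0^2/2), by positivity, ?_⟩
  intro e0 b γ d r0 he0 hb hγ hd hr0
  set l := min 1 ((γ*d/e0^2) ^ ((1:ℝ)/3)) with hldef
  have hP : 0 < (γ*d/e0^2) ^ ((1:ℝ)/3) := Real.rpow_pos_of_pos (by positivity) _
  have hl : 0 < l := lt_min one_pos hP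
  have hl1 : l ≤ 1 := min_le_left _ _
  have h_out : ∀ x, x ∉ Icc (0:ℝ) 1 → prof d l x = 0 := by
    intro x hx
    apply prof_zero_outside hl hd
    simp only [mem_Icc, not_and_or, not_le] at hx
    rcases hx with h | h
    · have : 1/2 - x ≤ |x - 1/2| := by
        rw [show (1/2 - x : ℝ) = -(x - 1/2) by ring]
        exact neg_le_abs _
      linarith
    · have := le_abs_self (x - 1/2)
      linarith
  have h_zero : prof d l 0 = 0 := by
    apply prof_zero_outside hl hd
    rw [show |(0:ℝ) - 1/2| = 1/2 by norm_num]
    linarith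
  have h_one : prof d l 1 = 0 := by
    apply prof_zero_outside hl hd
    rw [show |(1:ℝ) - 1/2| = 1/2 by norm_num]
    linarith
  set cfg : Config J1 e0 b d r0 :=
    { h := prof d l
      lipK := Real.toNNReal (4*d/l^2)
      lip := prof_lip hl hd
      h_nonneg := prof_nonneg hl hd
      h_outside := h_out
      h_zero := h_zero
      h_one := h_one
      h_vol := prof_vol hl hl1 hd
      k := 0
      pts := Fin.elim0
      pts_in := fun i => i.elim0
      H := Hf e0 l
      H_meas := Hf_meas e0 l
      H_L2 := HL2_on_omeg hl hd hM
      H_curl := by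
        intro φ hφ hφc hsupp
        constructor
        · have hz : (∫ z : ℝ × ℝ, (b * ∑ i : Fin 0, Jr J1 r0 (z - Fin.elim0 i)) * φ z)
              = 0 := by simp
          rw [hz]
          exact curl_row1 e0 l hl (prof d l) hφ hφc hsupp
        · exact curl_row2 e0 l (prof d l) } with hcfg
  refine ⟨cfg, rfl, ?_⟩
  have hen : energy γ W cfg
      = γ * surfaceE (prof d l) + (∫ z in Omeg (prof d l), W (Hf e0 l z)) := by
    rw [energy, hcfg]
    norm_num
  rw [hen]
  have hs : γ * surfaceE (prof d l) ≤ γ * (1 + 4*d/l) :=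
    mul_le_mul_of_nonneg_left (surface_bound hl hl1 hd) (le_of_lt hγ)
  have he : (∫ z in Omeg (prof d l), W (Hf e0 l z))
      ≤ c1⁻¹ * (e0^2*(1+M0^2/2)) * l^2 :=
    elastic_int_bound hl hd hM hc1 hW
  have harith := final_arith (K := c1⁻¹*(1+M0^2/2)) hγ hd he0 (by positivity)
  calc γ * surfaceE (prof d l) + (∫ z in Omeg (prof d l), W (Hf e0 l z))
      ≤ γ * (1 + 4*d/l) + c1⁻¹ * (e0^2*(1+M0^2/2)) * l^2 := add_le_add hs he
    _ = γ*(1 + 4*d/(min 1 ((γ*d/e0^2) ^ ((1:ℝ)/3))))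
        + (c1⁻¹*(1+M0^2/2))*e0^2*(min 1 ((γ*d/e0^2) ^ ((1:ℝ)/3)))^2 := by
        rw [← hldef]; ring
    _ ≤ (5 + c1⁻¹*(1+M0^2/2)) * (γ*(1+d) + (e0*γ*d) ^ ((2:ℝ)/3)) := harith
end
end

section
/- Let d > 0 and let h:[0,1]→[0,∞) be Lipschitz with h(0)=h(1)=0 and ∫₀¹ h dL¹ = d. Then ∫₀¹ √(1+|h'|²) dL¹ ≥ 1/2 + d. -/
open MeasureTheory Set
open scoped NNReal

/-!
Writing `C = ∫₀¹ |h'|`, the fundamental theorem of calculus for the Lipschitz, hence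
absolutely continuous, function `h` gives `2 h(y) = (h(y) - h(0)) - (h(1) - h(y)) ≤ C`
for every `y ∈ [0,1]`, hence `d ≤ C / 2`. On the other hand
`√(1 + t²) ≥ max 1 |t| ≥ (1 + |t|) / 2` pointwise, so the surface energy is at least
`1/2 + C/2 ≥ 1/2 + d`.
-/

lemma Real.sqrt_one_add_sq_le_one_add_abs (t : ℝ) : √(1 + t ^ 2) ≤ 1 + |t| :=
  Real.sqrt_le_iff.mpr ⟨by positivity, by nlinarith [sq_abs t, abs_nonneg t]⟩

lemma Real.one_add_abs_div_two_le_sqrt_one_add_sq (t : ℝ) : (1 + |t|) / 2 ≤ √(1 + t ^ 2) :=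
  Real.le_sqrt_of_sq_le (by nlinarith [sq_abs t, sq_nonneg (|t| - 1)])

namespace IntervalIntegrable

variable {g : ℝ → ℝ} {a b : ℝ}

lemma sqrt_one_add_sq (hg : IntervalIntegrable g volume a b) :
    IntervalIntegrable (fun x => √(1 + g x ^ 2)) volume a b := by
  refine ((intervalIntegrable_const (c := (1 : ℝ))).add hg.abs).mono_fun ?_
    (ae_of_all _ fun x => ?_)
  · exact (continuous_const.add (continuous_pow 2)).sqrt.comp_aestronglyMeasurable
      hg.def'.aestronglyMeasurable
  · simpa [abs_of_nonneg (Real.sqrt_nonneg _), abs_of_nonneg (by positivity : 0 ≤ 1 + |g x|)]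
      using Real.sqrt_one_add_sq_le_one_add_abs (g x)

lemma le_integral_sqrt_one_add_sq (hg : IntervalIntegrable g volume a b) (hab : a ≤ b) :
    (b - a + ∫ x in a..b, |g x|) / 2 ≤ ∫ x in a..b, √(1 + g x ^ 2) := calc
  (b - a + ∫ x in a..b, |g x|) / 2 = ∫ x in a..b, (1 + |g x|) / 2 := by
    rw [intervalIntegral.integral_div, intervalIntegral.integral_add intervalIntegrable_const
      hg.abs, intervalIntegral.integral_const, smul_eq_mul, mul_one]
  _ ≤ ∫ x in a..b, √(1 + g x ^ 2) :=
    intervalIntegral.integral_mono_on hab ((intervalIntegrable_const.add hg.abs).div_const 2)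
      hg.sqrt_one_add_sq fun x _ => Real.one_add_abs_div_two_le_sqrt_one_add_sq (g x)

end IntervalIntegrable

namespace AbsolutelyContinuousOnInterval

variable {f : ℝ → ℝ} {a b : ℝ}

lemma abs_sub_le_integral_abs_deriv (hf : AbsolutelyContinuousOnInterval f a b) (hab : a ≤ b) :
    |f b - f a| ≤ ∫ x in a..b, |deriv f x| :=
  hf.integral_deriv_eq_sub ▸ intervalIntegral.abs_integral_le_integral_abs hab

lemma two_mul_le_integral_abs_deriv (hf : AbsolutelyContinuousOnInterval f a b)
    (ha : f a = 0) (hb : f b = 0) {y : ℝ} (hy : y ∈ Icc a b) :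
    2 * f y ≤ ∫ x in a..b, |deriv f x| := by
  have hay : AbsolutelyContinuousOnInterval f a y :=
    hf.mono (uIcc_subset_uIcc left_mem_uIcc (Icc_subset_uIcc hy))
  have hyb : AbsolutelyContinuousOnInterval f y b :=
    hf.mono (uIcc_subset_uIcc (Icc_subset_uIcc hy) right_mem_uIcc)
  rw [← intervalIntegral.integral_add_adjacent_intervals hay.intervalIntegrable_deriv.abs
    hyb.intervalIntegrable_deriv.abs]
  linarith [le_abs_self (f y - f a), neg_abs_le (f b - f y),
    hay.abs_sub_le_integral_abs_deriv hy.1, hyb.abs_sub_le_integral_abs_deriv hy.2]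

lemma integral_le_mul_integral_abs_deriv (hf : AbsolutelyContinuousOnInterval f a b)
    (ha : f a = 0) (hb : f b = 0) (hab : a ≤ b) :
    ∫ x in a..b, f x ≤ (b - a) * (∫ x in a..b, |deriv f x|) / 2 := calc
  ∫ x in a..b, f x ≤ ∫ _ in a..b, (∫ x in a..b, |deriv f x|) / 2 :=
    intervalIntegral.integral_mono_on hab hf.continuousOn.intervalIntegrable
      intervalIntegrable_const fun y hy => by
        linarith [hf.two_mul_le_integral_abs_deriv ha hb hy]
  _ = (b - a) * (∫ x in a..b, |deriv f x|) / 2 := by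
    rw [intervalIntegral.integral_const, smul_eq_mul, mul_div_assoc]

end AbsolutelyContinuousOnInterval

theorem surface_energy_lower_bound_general (d : ℝ) (h : ℝ → ℝ) (K : ℝ≥0)
    (hlip : LipschitzWith K h)
    (h0 : h 0 = 0) (h1 : h 1 = 0)
    (hvol : (∫ x in Ioo (0:ℝ) 1, h x) = d) :
    (1/2 : ℝ) + d ≤ ∫ x in Ioo (0:ℝ) 1, Real.sqrt (1 + (deriv h x)^2) := by
  have hac : AbsolutelyContinuousOnInterval h 0 1 :=
    hlip.lipschitzOnWith.absolutelyContinuousOnInterval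
  rw [← integral_Ioc_eq_integral_Ioo, ← intervalIntegral.integral_of_le zero_le_one] at hvol ⊢
  have hd := hac.integral_le_mul_integral_abs_deriv h0 h1 zero_le_one
  have hs := hac.intervalIntegrable_deriv.le_integral_sqrt_one_add_sq zero_le_one
  linarith

/-- For a Lipschitz profile h : [0,1] → [0,∞) (extended by 0 outside [0,1]) with
    h(0) = h(1) = 0 and ∫₀¹ h = d > 0 one has ∫₀¹ √(1+|h'|²) ≥ 1/2 + d. -/
theorem surface_energy_lower_bound (d : ℝ) (hd : 0 < d) (h : ℝ → ℝ) (K : ℝ≥0)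
    (hlip : LipschitzWith K h) (hnn : ∀ x, 0 ≤ h x)
    (hout : ∀ x, x ∉ Icc (0:ℝ) 1 → h x = 0)
    (h0 : h 0 = 0) (h1 : h 1 = 0)
    (hvol : (∫ x in Ioo (0:ℝ) 1, h x) = d) :
    (1/2 : ℝ) + d ≤ ∫ x in Ioo (0:ℝ) 1, Real.sqrt (1 + (deriv h x)^2) :=
  surface_energy_lower_bound_general d h K hlip h0 h1 hvol
end

section
/- Let d > 0 and let h:[0,1]→[0,∞) be Lipschitz with h(0)=h(1)=0 and ∫₀¹ h dL¹ = d; let Ω_h := {(x,y) : 0<x<1, 0<y<h(x)}. Let J ⊆ ℤ, and for each i ∈ J let x_i ∈ (0,1) and l_i > 0 be such that x_i + l_i ≤ x_j for all i,j ∈ J with i < j, and such that ⋃_{i∈J} (x_i, x_i+l_i)×(0,l_i) ⊆ Ω_h. Set L_J := Σ_{i∈J} l_i and d_J := Σ_{i∈J} ∫_{x_i}^{x_i+l_i} h dL¹. Then ∫₀¹ √(1+|h'|²) dL¹ ≥ 2·d_J/L_J. -/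
open MeasureTheory Set
open scoped NNReal

theorem AbsolutelyContinuousOnInterval.abs_sub_le_integral_abs_deriv_s6 {f : ℝ → ℝ} {a b : ℝ}
    (hf : AbsolutelyContinuousOnInterval f a b) (hab : a ≤ b) :
    |f b - f a| ≤ ∫ t in a..b, |deriv f t| := by
  rw [← hf.integral_deriv_eq_sub]
  exact intervalIntegral.abs_integral_le_integral_abs hab

theorem AbsolutelyContinuousOnInterval.two_mul_le_integral_abs_deriv_s6 {f : ℝ → ℝ} {a b c : ℝ}
    (hf : AbsolutelyContinuousOnInterval f a b) (ha : f a = 0) (hb : f b = 0)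
    (hc : c ∈ Icc a b) :
    2 * f c ≤ ∫ t in a..b, |deriv f t| := by
  have hac : AbsolutelyContinuousOnInterval f a c :=
    hf.mono (uIcc_subset_uIcc left_mem_uIcc (Icc_subset_uIcc hc))
  have hcb : AbsolutelyContinuousOnInterval f c b :=
    hf.mono (uIcc_subset_uIcc (Icc_subset_uIcc hc) right_mem_uIcc)
  have hrise : f c ≤ ∫ t in a..c, |deriv f t| := by
    simpa [ha] using (le_abs_self _).trans (hac.abs_sub_le_integral_abs_deriv_s6 hc.1)
  have hfall : f c ≤ ∫ t in c..b, |deriv f t| := by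
    simpa [hb] using (neg_le_abs _).trans (hcb.abs_sub_le_integral_abs_deriv_s6 hc.2)
  rw [← intervalIntegral.integral_add_adjacent_intervals
    hac.intervalIntegrable_deriv.abs hcb.intervalIntegrable_deriv.abs]
  linarith

theorem integral_abs_le_integral_sqrt_one_add_sq {α : Type*} [MeasurableSpace α] {μ : Measure α}
    [IsFiniteMeasure μ] {g : α → ℝ} (hg : Integrable g μ) :
    ∫ x, |g x| ∂μ ≤ ∫ x, √(1 + g x ^ 2) ∂μ := by
  have hsqrt_le : ∀ x, √(1 + g x ^ 2) ≤ |g x| + 1 := fun x => by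
    rw [Real.sqrt_le_left (by positivity)]
    nlinarith [abs_nonneg (g x), sq_abs (g x)]
  have hint : Integrable (fun x => √(1 + g x ^ 2)) μ :=
    (hg.abs.add (integrable_const 1)).mono'
      ((by fun_prop : Continuous fun y : ℝ => √(1 + y ^ 2)).comp_aestronglyMeasurable
        hg.aestronglyMeasurable)
      (Filter.Eventually.of_forall fun x => by
        rw [Real.norm_of_nonneg (Real.sqrt_nonneg _)]; exact hsqrt_le x)
  refine integral_mono_of_nonneg (Filter.Eventually.of_forall fun x => abs_nonneg _) hint
    (Filter.Eventually.of_forall fun x => ?_)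
  simp only [← Real.sqrt_sq_eq_abs]
  exact Real.sqrt_le_sqrt (by linarith)

theorem setIntegral_Ioo_le_mul_of_le {f : ℝ → ℝ} {a b M : ℝ} (hab : a ≤ b)
    (hf : IntegrableOn f (Ioo a b)) (hM : ∀ t ∈ Ioo a b, f t ≤ M) :
    ∫ t in Ioo a b, f t ≤ M * (b - a) := by
  calc ∫ t in Ioo a b, f t ≤ ∫ _ in Ioo a b, M :=
        setIntegral_mono_on hf (integrableOn_const (by simp)) measurableSet_Ioo hM
    _ = M * (b - a) := by
        rw [setIntegral_const, smul_eq_mul, Real.volume_real_Ioo_of_le hab, mul_comm]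

/-- No summability is assumed: a non-summable series has `tsum = 0`. -/
theorem tsum_div_tsum_le_of_le_mul {ι : Type*} {a b : ι → ℝ} {M : ℝ} (hM : 0 ≤ M)
    (hb : ∀ i, 0 ≤ b i) (hab : ∀ i, a i ≤ M * b i) :
    (∑' i, a i) / (∑' i, b i) ≤ M := by
  by_cases hbs : Summable b
  · refine div_le_of_le_mul₀ (tsum_nonneg hb) hM ?_
    by_cases has : Summable a
    · rw [← tsum_mul_left]
      exact has.tsum_le_tsum hab (hbs.mul_left M)
    · rw [tsum_eq_zero_of_not_summable has]
      exact mul_nonneg hM (tsum_nonneg hb)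
  · simp [tsum_eq_zero_of_not_summable hbs, hM]

theorem Ioo_subset_Ioo_zero_one_of_prod_subset_Omeg {h : ℝ → ℝ} {x l : ℝ} (hl : 0 < l)
    (hsub : Ioo x (x + l) ×ˢ Ioo 0 l ⊆ Omeg h) : Ioo x (x + l) ⊆ Ioo 0 1 := fun _ ht =>
  have hmem := hsub (mk_mem_prod ht (⟨half_pos hl, half_lt_self hl⟩ : l / 2 ∈ Ioo 0 l))
  ⟨hmem.1, hmem.2.1⟩

theorem isoperimetric_estimate_general (h : ℝ → ℝ) (K : ℝ≥0)
    (hlip : LipschitzWith K h)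
    (h0 : h 0 = 0) (h1 : h 1 = 0)
    (J : Set ℤ) (x l : ℤ → ℝ)
    (hl : ∀ i ∈ J, 0 < l i)
    (hsub : ∀ i ∈ J, (Ioo (x i) (x i + l i)) ×ˢ (Ioo (0:ℝ) (l i)) ⊆ Omeg h) :
    2 * (∑' i : J, ∫ t in Ioo (x (i : ℤ)) (x (i : ℤ) + l (i : ℤ)), h t) /
        (∑' i : J, l (i : ℤ)) ≤
      ∫ t in Ioo (0:ℝ) 1, Real.sqrt (1 + (deriv h t)^2) := by
  obtain ⟨c, hc, hmax⟩ := isCompact_Icc.exists_isMaxOn (nonempty_Icc.2 zero_le_one)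
    hlip.continuous.continuousOn
  have hac : AbsolutelyContinuousOnInterval h 0 1 :=
    (hlip.lipschitzOnWith (s := uIcc 0 1)).absolutelyContinuousOnInterval
  have hsquare : ∀ i : J, ∫ t in Ioo (x i) (x i + l i), h t ≤ h c * l i := fun ⟨i, hi⟩ => by
    have hI := Ioo_subset_Ioo_zero_one_of_prod_subset_Omeg (hl i hi) (hsub i hi)
    simpa using setIntegral_Ioo_le_mul_of_le (by linarith [hl i hi])
      (hlip.continuous.integrableOn_Icc.mono_set Ioo_subset_Icc_self)
      fun t ht => hmax ⟨(hI ht).1.le, (hI ht).2.le⟩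
  have hratio := tsum_div_tsum_le_of_le_mul (h0 ▸ hmax ⟨le_rfl, zero_le_one⟩)
    (fun i : J => (hl i i.2).le) hsquare
  have hheight : 2 * h c ≤ ∫ t in Ioo (0:ℝ) 1, |deriv h t| := by
    rw [← integral_Ioc_eq_integral_Ioo, ← intervalIntegral.integral_of_le zero_le_one]
    exact hac.two_mul_le_integral_abs_deriv_s6 h0 h1 hc
  have hlength := integral_abs_le_integral_sqrt_one_add_sq
    (hac.intervalIntegrable_deriv.1.mono_set Ioo_subset_Ioc_self)
  rw [mul_div_assoc]
  linarith

/-- Lemma (generalized isoperimetric estimate): if the squares (x_i,x_i+l_i)×(0,l_i),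
    i ∈ J ⊆ ℤ, are ordered and contained in Ω_h, then with L_J = Σ l_i and
    d_J = Σ ∫_{x_i}^{x_i+l_i} h one has ∫₀¹ √(1+|h'|²) ≥ 2 d_J / L_J. -/
theorem isoperimetric_estimate (d : ℝ) (hd : 0 < d) (h : ℝ → ℝ) (K : ℝ≥0)
    (hlip : LipschitzWith K h) (hnn : ∀ x, 0 ≤ h x)
    (hout : ∀ x, x ∉ Icc (0:ℝ) 1 → h x = 0)
    (h0 : h 0 = 0) (h1 : h 1 = 0)
    (hvol : (∫ x in Ioo (0:ℝ) 1, h x) = d)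
    (J : Set ℤ) (x l : ℤ → ℝ)
    (hx : ∀ i ∈ J, x i ∈ Ioo (0:ℝ) 1) (hl : ∀ i ∈ J, 0 < l i)
    (horder : ∀ i ∈ J, ∀ j ∈ J, i < j → x i + l i ≤ x j)
    (hsub : ∀ i ∈ J, (Ioo (x i) (x i + l i)) ×ˢ (Ioo (0:ℝ) (l i)) ⊆ Omeg h) :
    2 * (∑' i : J, ∫ t in Ioo (x (i : ℤ)) (x (i : ℤ) + l (i : ℤ)), h t) /
        (∑' i : J, l (i : ℤ)) ≤
      ∫ t in Ioo (0:ℝ) 1, Real.sqrt (1 + (deriv h t)^2) :=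
  isoperimetric_estimate_general h K hlip h0 h1 J x l hl hsub
end

section
/- There is a universal constant C > 0 such that the following holds. Let e₀, b > 0, r₀ ∈ (0,1] with b ≥ 4·r₀·e₀, let L ∈ (0,1] and k := ⌊L·e₀/b⌋, and let Ĥ be the explicitly constructed strain field (defined in the context). Then for almost every (x,y) ∈ ℝ² with x ≤ L + b/e₀: |Ĥ(x,y)| ≤ C·( (b / dist((x,y), {(i·b/e₀, r₀) : i ∈ ℤ})) · 1_{{y ≤ b/e₀}}(y) + e₀ · 1_{{y ≤ 3b/e₀}}(y) ). -/
open MeasureTheory Real Set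
open scoped NNReal Classical

noncomputable section

/-- The gradient of the cell displacement u on one period cell (0,b/e₀]×ℝ:
    the matrix ∇u on the regions A (below the core line), B (transition triangle), C (above). -/
def MhatCell (e0 b r0 : ℝ) (x y : ℝ) : Mat2 :=
  if y ≤ r0 * e0 * x / b then !![e0, 0; 0, 0]
  else if y < (r0 * e0 / b - 1) * x + b / e0 then
    !![((2 * e0 * x * (r0 * e0 / b - 1) + b - e0 * y) * (b / e0 - x)
          + e0 * x^2 * (r0 * e0 / b - 1) + b * x - e0 * x * y) / (b / e0 - x)^2,
       -(e0 * x) / (b / e0 - x); 0, 0]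
  else 0

/-- The (b/e₀,0)-periodic field M̂. -/
def Mhat (e0 b r0 : ℝ) (z : ℝ × ℝ) : Mat2 :=
  MhatCell e0 b r0 (b / e0 * Int.fract (z.1 / (b / e0))) z.2

/-- The field N̂ = ∇v used in the dislocation-free right part. -/
def Nhat (e0 b : ℝ) (k : ℕ) (z : ℝ × ℝ) : Mat2 :=
  if z.2 ≤ 0 then !![e0, 0; 0, 0]
  else if z.2 < z.1 - ((k : ℝ) - 1) * (b / e0) then !![e0, -e0; 0, 0]
  else 0

/-- The explicitly constructed strain field Ĥ (with k = ⌊L e₀ / b⌋). -/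
def Hhat (e0 b r0 L : ℝ) (z : ℝ × ℝ) : Mat2 :=
  if z.1 ≤ ((⌊L * e0 / b⌋₊ : ℝ) - 1) * (b / e0) then Mhat e0 b r0 z
  else Nhat e0 b ⌊L * e0 / b⌋₊ z

/-- Euclidean distance to the lattice of dislocation centers {(i·per, r₀) : i ∈ ℤ}. -/
def distToLattice (per r0 : ℝ) (z : ℝ × ℝ) : ℝ :=
  ⨅ i : ℤ, Real.sqrt ((z.1 - (i : ℝ) * per)^2 + (z.2 - r0)^2)

/-- The union of the 2r₀-balls around the dislocation centers. -/
def Sset (per r0 : ℝ) : Set (ℝ × ℝ) := ⋃ i : ℤ, ball2 (((i : ℝ) * per, r0)) (2 * r0)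

/-- The mollified strain field H = Ĥ ∗ J_{r₀}. -/
def Hconv (J1 : ℝ × ℝ → ℝ) (e0 b r0 L : ℝ) (z : ℝ × ℝ) : Mat2 :=
  Matrix.of fun i j => ∫ w, Jr J1 r0 w * Hhat e0 b r0 L (z - w) i j

-- ===== Auxiliary lemmas =====

lemma frobSq_row' (p q : ℝ) : frobSq !![p, q; 0, 0] = p^2 + q^2 := by
  simp [frobSq, Fin.sum_univ_two]

lemma frobNorm_zero' : frobNorm (0 : Mat2) = 0 := by simp [frobNorm, frobSq]

lemma frobNorm_row_le (p q : ℝ) : frobNorm !![p, q; 0, 0] ≤ |p| + |q| := by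
  rw [frobNorm, frobSq_row']
  calc Real.sqrt (p^2+q^2) ≤ Real.sqrt ((|p|+|q|)^2) :=
        Real.sqrt_le_sqrt (by nlinarith [abs_nonneg p, abs_nonneg q, sq_abs p, sq_abs q])
    _ = |p|+|q| := Real.sqrt_sq (by positivity)

lemma lines_null (a : ℝ) (ha : 0 < a) :
    volume {z : ℝ × ℝ | Int.fract (z.1 / a) = 0} = 0 := by
  have hsub : {z : ℝ × ℝ | Int.fract (z.1 / a) = 0} ⊆
      ⋃ n : ℤ, {(n : ℝ) * a} ×ˢ (univ : Set ℝ) := by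
    intro z hz
    simp only [Set.mem_setOf_eq] at hz
    have h1 : z.1 / a = (⌊z.1/a⌋ : ℝ) := by
      rw [Int.fract] at hz; linarith
    refine Set.mem_iUnion.2 ⟨⌊z.1/a⌋, ?_, trivial⟩
    simp only [Set.mem_singleton_iff]
    field_simp at h1
    linarith
  refine measure_mono_null hsub (measure_iUnion_null fun n => ?_)
  rw [show (volume : Measure (ℝ × ℝ)) = (volume : Measure ℝ).prod volume from rfl,
    Measure.prod_prod]
  simp

lemma distToLattice_nonneg' (per r0 : ℝ) (z : ℝ × ℝ) : 0 ≤ distToLattice per r0 z :=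
  Real.iInf_nonneg fun _ => Real.sqrt_nonneg _

lemma distToLattice_le' (per r0 : ℝ) (z : ℝ × ℝ) (i : ℤ) :
    distToLattice per r0 z ≤ Real.sqrt ((z.1 - (i : ℝ) * per)^2 + (z.2 - r0)^2) :=
  ciInf_le ⟨0, by rintro w ⟨j, rfl⟩; exact Real.sqrt_nonneg _⟩ i

lemma distToLattice_pos' (a r0 : ℝ) (ha : 0 < a) (z : ℝ × ℝ)
    (hf : Int.fract (z.1 / a) ≠ 0) : 0 < distToLattice a r0 z := by
  set f := Int.fract (z.1 / a) with hf_def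
  have hf0 : 0 < f := lt_of_le_of_ne (Int.fract_nonneg _) (Ne.symm hf)
  have hf1 : f < 1 := Int.fract_lt_one _
  have hz1 : z.1 = ((⌊z.1/a⌋ : ℝ) + f) * a := by
    rw [hf_def, Int.fract]; field_simp; ring
  refine lt_of_lt_of_le (show (0:ℝ) < a * min f (1 - f) from
    mul_pos ha (lt_min hf0 (by linarith))) (le_ciInf fun i => ?_)
  have key : a * min f (1-f) ≤ |z.1 - (i:ℝ)*a| := by
    rw [hz1]
    have h : ((⌊z.1/a⌋ : ℝ) + f) * a - (i:ℝ)*a = ((⌊z.1/a⌋ - i : ℤ) + f) * a := by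
      push_cast; ring
    rw [h, abs_mul, abs_of_pos ha]
    rcases le_or_gt i ⌊z.1/a⌋ with h | h
    · have h0 : (0:ℝ) ≤ (⌊z.1/a⌋ - i : ℤ) := by exact_mod_cast sub_nonneg.2 h
      have : f ≤ |((⌊z.1/a⌋ - i : ℤ) : ℝ) + f| := by
        rw [abs_of_pos (by linarith)]; linarith
      nlinarith [min_le_left f (1-f)]
    · have h0' : (⌊z.1/a⌋ - i : ℤ) ≤ -1 := by omega
      have h0 : ((⌊z.1/a⌋ - i : ℤ) : ℝ) ≤ -1 := by exact_mod_cast h0'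
      have : 1 - f ≤ |((⌊z.1/a⌋ - i : ℤ) : ℝ) + f| := by
        rw [abs_of_neg (by linarith)]; linarith
      nlinarith [min_le_right f (1-f)]
  calc a * min f (1-f) ≤ |z.1 - (i:ℝ)*a| := key
    _ = Real.sqrt ((z.1 - (i:ℝ)*a)^2) := (Real.sqrt_sq_eq_abs _).symm
    _ ≤ _ := Real.sqrt_le_sqrt (by nlinarith [sq_nonneg (z.2 - r0)])

set_option maxHeartbeats 1000000 in
lemma MhatCellB_bound (e0 b r0 x y : ℝ) (he0 : 0 < e0) (hb : 0 < b)
    (hr0 : 0 < r0) (hbr : 4*r0*e0 ≤ b) (hx0 : 0 ≤ x) (hxa : x < b/e0)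
    (h1 : r0*e0*x/b < y) (h2 : y < (r0*e0/b-1)*x + b/e0) :
    |((2*e0*x*(r0*e0/b-1) + b - e0*y)*(b/e0-x) + e0*x^2*(r0*e0/b-1) + b*x - e0*x*y) / (b/e0-x)^2|
      ≤ 3*(b/(b/e0-x))
    ∧ |(-(e0*x))/(b/e0-x)| ≤ b/(b/e0-x) ∧ |y - r0| ≤ b/e0 - x := by
  have ht : 0 < b/e0 - x := by linarith
  have hba : e0 * (b/e0) = b := by field_simp
  have hc0 : 0 ≤ r0*e0/b := by positivity
  have hc1 : r0*e0/b ≤ 1/4 := by rw [div_le_iff₀ hb]; linarith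
  have hcx : (r0*e0/b)*x = r0*e0*x/b := by ring
  have hr0a : r0*e0/b*(b/e0) = r0 := by field_simp
  have hs0 : 0 < (r0*e0/b-1)*x + b/e0 - y := by linarith
  have hst : (r0*e0/b-1)*x + b/e0 - y < b/e0 - x := by nlinarith
  refine ⟨?_, ?_, ?_⟩
  · have hident : (2*e0*x*(r0*e0/b-1) + b - e0*y)*(b/e0-x) + e0*x^2*(r0*e0/b-1) + b*x - e0*x*y
        = e0*(((r0*e0/b-1)*x + ((r0*e0/b-1)*x + b/e0 - y))*(b/e0-x)
             + x*((r0*e0/b-1)*x + b/e0 - y)) := by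
      field_simp
      ring
    rw [hident, abs_div, abs_of_pos (by positivity : (0:ℝ) < (b/e0-x)^2),
        show 3*(b/(b/e0-x)) = (3*b)/(b/e0-x) by ring,
        div_le_div_iff₀ (by positivity) ht, abs_mul, abs_of_pos he0]
    have hE : |((r0*e0/b-1)*x + ((r0*e0/b-1)*x + b/e0 - y))*(b/e0-x)
             + x*((r0*e0/b-1)*x + b/e0 - y)| ≤ 3*(b/e0)*(b/e0-x) := by
      rw [abs_le]
      constructor <;> nlinarith [mul_pos ht hs0, mul_nonneg hx0 hs0.le, mul_nonneg hx0 ht.le,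
        mul_nonneg hc0 hx0, mul_nonneg (mul_nonneg hc0 hx0) ht.le, sq_nonneg (b/e0-x)]
    calc e0 * |((r0*e0/b-1)*x + ((r0*e0/b-1)*x + b/e0 - y))*(b/e0-x)
             + x*((r0*e0/b-1)*x + b/e0 - y)| * (b/e0-x)
        ≤ e0 * (3*(b/e0)*(b/e0-x)) * (b/e0-x) := by
          have := mul_le_mul_of_nonneg_left hE he0.le
          nlinarith
      _ = 3*b*(b/e0-x)^2 := by field_simp
  · rw [abs_div, abs_of_pos ht, div_le_div_iff₀ ht ht, abs_neg, abs_of_nonneg (by positivity)]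
    nlinarith [mul_le_mul_of_nonneg_left hxa.le he0.le]
  · have e1 : (r0*e0/b)*x - r0 = -((r0*e0/b)*(b/e0 - x)) := by field_simp; ring
    have e2 : (r0*e0/b)*(b/e0-x) ≤ 1*(b/e0-x) :=
      mul_le_mul_of_nonneg_right (by linarith) ht.le
    have e3 : 0 ≤ (r0*e0/b)*(b/e0-x) := mul_nonneg hc0 ht.le
    rw [abs_le]
    constructor <;> linarith

set_option maxHeartbeats 1000000 in
/-- Estimate (pointwise bound for Ĥ): there is a universal C > 0 such that for a.e.
    (x,y) with x ≤ L + b/e₀,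
    |Ĥ(x,y)| ≤ C (b/dist((x,y),lattice)·1_{y≤b/e₀} + e₀·1_{y≤3b/e₀}). -/
theorem Hhat_pointwise_bound :
    ∃ C : ℝ, 0 < C ∧
      ∀ e0 b r0 L : ℝ, 0 < e0 → 0 < b → 0 < r0 → r0 ≤ 1 → 4 * r0 * e0 ≤ b →
        0 < L → L ≤ 1 →
        ∀ᵐ z : ℝ × ℝ ∂volume, z.1 ≤ L + b / e0 →
          frobNorm (Hhat e0 b r0 L z) ≤
            C * ((if z.2 ≤ b / e0 then b / distToLattice (b / e0) r0 z else 0) +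
                 (if z.2 ≤ 3 * (b / e0) then e0 else 0)) := by
  refine ⟨10, by norm_num, ?_⟩
  intro e0 b r0 L he0 hb hr0 hr01 hbr hL hL1
  have ha : 0 < b / e0 := div_pos hb he0
  have hba : e0 * (b / e0) = b := by field_simp
  have hra : 4 * r0 ≤ b / e0 := by rw [le_div_iff₀ he0]; linarith
  have hae : ∀ᵐ z : ℝ × ℝ ∂volume, Int.fract (z.1 / (b / e0)) ≠ 0 := by
    rw [ae_iff]
    simpa using lines_null (b / e0) ha
  filter_upwards [hae] with z hfz hzx
  have hf0 : 0 < Int.fract (z.1 / (b / e0)) :=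
    lt_of_le_of_ne (Int.fract_nonneg _) (Ne.symm hfz)
  have hf1 : Int.fract (z.1 / (b / e0)) < 1 := Int.fract_lt_one _
  have hx0 : 0 ≤ b / e0 * Int.fract (z.1 / (b / e0)) := by positivity
  have hxa : b / e0 * Int.fract (z.1 / (b / e0)) < b / e0 := by nlinarith
  have hT1 : 0 ≤ (if z.2 ≤ b / e0 then b / distToLattice (b / e0) r0 z else 0) := by
    split_ifs
    · exact div_nonneg hb.le (distToLattice_nonneg' _ _ _)
    · exact le_refl 0
  have hT2 : 0 ≤ (if z.2 ≤ 3 * (b / e0) then e0 else 0) := by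
    split_ifs
    · exact he0.le
    · exact le_refl 0
  have hfnA : frobNorm !![e0, 0; 0, 0] ≤ e0 := by
    have := frobNorm_row_le e0 0
    rw [abs_of_pos he0, abs_zero] at this
    linarith
  by_cases hcase : z.1 ≤ ((⌊L * e0 / b⌋₊ : ℝ) - 1) * (b / e0)
  · -- Mhat branch
    by_cases hA : z.2 ≤ r0 * e0 * (b / e0 * Int.fract (z.1 / (b / e0))) / b
    · -- region A
      rw [Hhat, if_pos hcase, Mhat, MhatCell, if_pos hA]
      have hxr : r0 * e0 * (b / e0 * Int.fract (z.1 / (b / e0))) / b ≤ r0 := by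
        rw [div_le_iff₀ hb]
        nlinarith [mul_le_mul_of_nonneg_left hxa.le (mul_pos hr0 he0).le]
      have hy3 : z.2 ≤ 3 * (b / e0) := by linarith
      rw [if_pos hy3]
      linarith
    · push_neg at hA
      by_cases hB : z.2 < (r0 * e0 / b - 1) * (b / e0 * Int.fract (z.1 / (b / e0))) + b / e0
      · -- region B
        rw [Hhat, if_pos hcase, Mhat, MhatCell, if_neg (not_le.mpr hA), if_pos hB]
        obtain ⟨hM11, hM12, hyr⟩ := MhatCellB_bound e0 b r0
          (b / e0 * Int.fract (z.1 / (b / e0))) z.2 he0 hb hr0 hbr hx0 hxa hA hB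
        have hc1' : r0 * e0 / b ≤ 1 := by rw [div_le_iff₀ hb]; nlinarith
        have hy1 : z.2 ≤ b / e0 := by
          nlinarith [mul_le_mul_of_nonneg_right hc1' hx0]
        have hz1 : z.1 - ((⌊z.1 / (b / e0)⌋ + 1 : ℤ) : ℝ) * (b / e0)
            = -(b / e0 - b / e0 * Int.fract (z.1 / (b / e0))) := by
          rw [Int.fract]
          push_cast
          field_simp
          ring
        have hdu : distToLattice (b / e0) r0 z
            ≤ Real.sqrt ((b / e0 - b / e0 * Int.fract (z.1 / (b / e0)))^2 + (z.2 - r0)^2) := by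
          have h := distToLattice_le' (b / e0) r0 z (⌊z.1 / (b / e0)⌋ + 1)
          rwa [hz1, neg_sq] at h
        have ht : 0 < b / e0 - b / e0 * Int.fract (z.1 / (b / e0)) := by linarith
        have hd2 : distToLattice (b / e0) r0 z
            ≤ 2 * (b / e0 - b / e0 * Int.fract (z.1 / (b / e0))) := by
          refine hdu.trans ?_
          have hsq : (b / e0 - b / e0 * Int.fract (z.1 / (b / e0)))^2 + (z.2 - r0)^2
              ≤ (2 * (b / e0 - b / e0 * Int.fract (z.1 / (b / e0))))^2 := by
            nlinarith [sq_abs (z.2 - r0), abs_nonneg (z.2 - r0)]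
          calc Real.sqrt _
              ≤ Real.sqrt ((2 * (b / e0 - b / e0 * Int.fract (z.1 / (b / e0))))^2) :=
                Real.sqrt_le_sqrt hsq
            _ = 2 * (b / e0 - b / e0 * Int.fract (z.1 / (b / e0))) :=
                Real.sqrt_sq (by linarith)
        have hdpos : 0 < distToLattice (b / e0) r0 z := distToLattice_pos' (b / e0) r0 ha z hfz
        have hdiv : b / (2 * (b / e0 - b / e0 * Int.fract (z.1 / (b / e0))))
            ≤ b / distToLattice (b / e0) r0 z :=
          div_le_div_of_nonneg_left hb.le hdpos hd2
        have hbt : b / (2 * (b / e0 - b / e0 * Int.fract (z.1 / (b / e0))))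
            = (b / (b / e0 - b / e0 * Int.fract (z.1 / (b / e0)))) / 2 := by
          rw [div_div]
          ring_nf
        have hfn := frobNorm_row_le
          (((2 * e0 * (b / e0 * Int.fract (z.1 / (b / e0))) * (r0 * e0 / b - 1) + b - e0 * z.2) *
              (b / e0 - b / e0 * Int.fract (z.1 / (b / e0)))
            + e0 * (b / e0 * Int.fract (z.1 / (b / e0)))^2 * (r0 * e0 / b - 1)
            + b * (b / e0 * Int.fract (z.1 / (b / e0)))
            - e0 * (b / e0 * Int.fract (z.1 / (b / e0))) * z.2)
              / (b / e0 - b / e0 * Int.fract (z.1 / (b / e0)))^2)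
          (-(e0 * (b / e0 * Int.fract (z.1 / (b / e0))))
              / (b / e0 - b / e0 * Int.fract (z.1 / (b / e0))))
        rw [if_pos hy1]
        rw [hbt] at hdiv
        have hDn : 0 ≤ b / distToLattice (b / e0) r0 z :=
          div_nonneg hb.le (distToLattice_nonneg' _ _ _)
        have hAn : 0 ≤ b / (b / e0 - b / e0 * Int.fract (z.1 / (b / e0))) :=
          div_nonneg hb.le ht.le
        linarith
      · rw [Hhat, if_pos hcase, Mhat, MhatCell, if_neg (not_le.mpr hA), if_neg hB,
          frobNorm_zero']
        linarith
  · -- Nhat branch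
    by_cases h1 : z.2 ≤ 0
    · rw [Hhat, if_neg hcase, Nhat, if_pos h1]
      have hy3 : z.2 ≤ 3 * (b / e0) := by linarith
      rw [if_pos hy3]
      linarith
    · by_cases h2 : z.2 < z.1 - ((⌊L * e0 / b⌋₊ : ℝ) - 1) * (b / e0)
      · rw [Hhat, if_neg hcase, Nhat, if_neg h1, if_pos h2]
        have hk : L * e0 / b < (⌊L * e0 / b⌋₊ : ℝ) + 1 := Nat.lt_floor_add_one _
        have hkL : L < ((⌊L * e0 / b⌋₊ : ℝ) + 1) * (b / e0) := by
          have hid : (L * e0 / b) * (b / e0) = L := by field_simp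
          have h := mul_lt_mul_of_pos_right hk ha
          rwa [hid] at h
        have hy3 : z.2 ≤ 3 * (b / e0) := by
          have he : ((⌊L * e0 / b⌋₊ : ℝ) + 1) * (b / e0) + (b / e0)
              - ((⌊L * e0 / b⌋₊ : ℝ) - 1) * (b / e0) = 3 * (b / e0) := by ring
          linarith
        rw [if_pos hy3]
        have hfn : frobNorm !![e0, -e0; 0, 0] ≤ 2 * e0 := by
          have := frobNorm_row_le e0 (-e0)
          rw [abs_of_pos he0, abs_neg, abs_of_pos he0] at this
          linarith
        linarith
      · rw [Hhat, if_neg hcase, Nhat, if_neg h1, if_neg h2, frobNorm_zero']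
        linarith
end
end
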